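/- arXiv:2204.13129 — 10 statements merged into one kernel-verified Lean document; each statement's English description precedes it below -/
import Mathlib

section
/- For every real N > 0, every real c > 0 and every integer k ≥ 0, the limit as n → ∞ (over integers n > c) of P_{n+k}(N,n,c/n) exists and equals e^{−c(2N+1)} (cN)^k Σ_{m=0}^∞ (c²N(N+1))^m / (m!(m+k)!). -/
open Filter Finset

lemma aux_choose_tendsto (d j : ℕ) :
    Tendsto (fun n : ℕ => ((n + d).choose j : ℝ) / (n : ℝ) ^ j) atTop
      (nhds (1 / (j.factorial : ℝ))) := by
  have key : ∀ᶠ n : ℕ in atTop,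
      (∏ i ∈ Finset.range j, (1 + ((d : ℝ) - i) / n)) / (j.factorial : ℝ)
        = ((n + d).choose j : ℝ) / (n : ℝ) ^ j := by
    filter_upwards [eventually_ge_atTop (max 1 j)] with n hn
    have hn1 : 1 ≤ n := le_of_max_le_left hn
    have hnj : j ≤ n := le_of_max_le_right hn
    have hn0 : (n : ℝ) ≠ 0 := Nat.cast_ne_zero.mpr (by omega)
    have hcast : (j.factorial : ℝ) * ((n + d).choose j : ℝ)
        = ∏ i ∈ Finset.range j, ((n : ℝ) + d - i) := by
      have h1 : ((n + d).descFactorial j : ℝ) = ((j.factorial * (n + d).choose j : ℕ) : ℝ) := by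
        rw [Nat.descFactorial_eq_factorial_mul_choose]
      rw [Nat.descFactorial_eq_prod_range] at h1
      push_cast at h1
      rw [← h1]
      refine Finset.prod_congr rfl fun i hi => ?_
      have hi' : i ≤ n + d := by
        have := Finset.mem_range.mp hi; omega
      push_cast [Nat.cast_sub hi']
      ring
    have hfac : ∀ i ∈ Finset.range j, (1 + ((d : ℝ) - i) / n) = ((n : ℝ) + d - i) / n := by
      intro i hi
      field_simp
      ring
    rw [Finset.prod_congr rfl hfac, Finset.prod_div_distrib, Finset.prod_const,
      Finset.card_range, ← hcast]
    have hj0 : (j.factorial : ℝ) ≠ 0 := Nat.cast_ne_zero.mpr j.factorial_ne_zero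
    field_simp
  have h1 : Tendsto (fun n : ℕ => (∏ i ∈ Finset.range j, (1 + ((d : ℝ) - i) / n))
      / (j.factorial : ℝ)) atTop (nhds ((∏ _i ∈ Finset.range j, (1 : ℝ)) / (j.factorial : ℝ))) := by
    refine Tendsto.div_const ?_ _
    refine tendsto_finset_prod _ fun i _ => ?_
    simpa using tendsto_const_nhds.add (tendsto_const_div_atTop_nhds_zero_nat ((d : ℝ) - i))
  simp only [Finset.prod_const_one] at h1
  exact h1.congr' key

lemma aux_choose_le (n j : ℕ) : (n.choose j : ℝ) ≤ (n : ℝ) ^ j / (j.factorial : ℝ) := by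
  have h : (j.factorial * n.choose j : ℕ) ≤ n ^ j := by
    rw [← Nat.descFactorial_eq_factorial_mul_choose]
    exact Nat.descFactorial_le_pow n j
  have h' : (j.factorial : ℝ) * (n.choose j : ℝ) ≤ (n : ℝ) ^ j := by exact_mod_cast h
  rw [le_div_iff₀ (by exact_mod_cast j.factorial_pos : (0:ℝ) < (j.factorial : ℝ))]
  linarith [h']

/-- term of the series: `plf N c k n m` is the `m`-th term of `Pl N n (n+k) (c/n)`,
extended by zero for `m > n`. -/
noncomputable def plf (N c : ℝ) (k n m : ℕ) : ℝ :=
  if m ≤ n then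
    ((1 + N * (c / n)) ^ (2 * n + k + 1))⁻¹ *
      ((c / n) ^ (2 * m + k) * (1 - c / n) ^ (n - m) * N ^ (k + m) * (N + 1) ^ m *
        (n.choose m : ℝ) * ((n + k).choose (n - m) : ℝ))
  else 0


/-- The eigenvalues `P_l(N,n,λ)` of the Fock-diagonal state `Φ_{λ,|n⟩⟨n|}(τ_N)`. -/
noncomputable def Pl (N : ℝ) (n l : ℕ) (lam : ℝ) : ℝ :=
  ((1 + N * lam) ^ (l + n + 1))⁻¹ *
    ∑ m ∈ Finset.Icc (n - l) n,
      lam ^ (2 * m + l - n) * (1 - lam) ^ (n - m) * N ^ (l + m - n) * (N + 1) ^ m *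
        (n.choose m : ℝ) * (l.choose (n - m) : ℝ)

/-- For every `N > 0`, `c > 0` and integer `k ≥ 0`, the limit as `n → ∞` of
`P_{n+k}(N,n,c/n)` exists and equals
`e^{−c(2N+1)} (cN)^k Σ_{m=0}^∞ (c²N(N+1))^m / (m!(m+k)!)`. -/
theorem tendsto_Pl_shifted_pos (N c : ℝ) (hN : 0 < N) (hc : 0 < c) (k : ℕ) :
    Filter.Tendsto (fun n : ℕ => Pl N n (n + k) (c / n)) Filter.atTop
      (nhds (Real.exp (-c * (2 * N + 1)) * (c * N) ^ k *
        ∑' m : ℕ, (c ^ 2 * N * (N + 1)) ^ m /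
          ((m.factorial : ℝ) * ((m + k).factorial : ℝ)))) := by
  classical
  set E : ℝ := Real.exp (-c * (2 * N + 1)) * (c * N) ^ k with hE
  set a : ℕ → ℝ := fun m => E * ((c ^ 2 * N * (N + 1)) ^ m /
      ((m.factorial : ℝ) * ((m + k).factorial : ℝ))) with ha
  set bound : ℕ → ℝ := fun m => c ^ (2 * m + k) * (1 + k : ℝ) ^ (k + m) * N ^ (k + m) *
      (N + 1) ^ m / ((m.factorial : ℝ) * ((k + m).factorial : ℝ)) with hbound
  have hcn : Tendsto (fun n : ℕ => c / (n : ℝ)) atTop (nhds 0) :=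
    tendsto_const_div_atTop_nhds_zero_nat c
  -- summability of the bound
  have hb_sum : Summable bound := by
    set C0 : ℝ := c ^ k * (1 + k : ℝ) ^ k * N ^ k with hC0
    set r : ℝ := c ^ 2 * (1 + k : ℝ) * N * (N + 1) with hr
    refine Summable.of_nonneg_of_le (fun m => by positivity) (fun m => ?_)
      ((Real.summable_pow_div_factorial r).mul_left C0)
    have h1 : bound m = (C0 * (r ^ m / (m.factorial : ℝ))) * (1 / ((k + m).factorial : ℝ)) := by
      simp only [hbound, hC0, hr]
      rw [show 2 * m + k = k + 2 * m from by omega, pow_add, pow_mul, pow_add, pow_add,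
        mul_pow, mul_pow, mul_pow]
      have hm0 : (m.factorial : ℝ) ≠ 0 := Nat.cast_ne_zero.mpr m.factorial_ne_zero
      have hk0 : ((k + m).factorial : ℝ) ≠ 0 := Nat.cast_ne_zero.mpr (k + m).factorial_ne_zero
      field_simp
    rw [h1]
    have h2 : (1 / ((k + m).factorial : ℝ)) ≤ 1 := by
      rw [div_le_one (by exact_mod_cast (k + m).factorial_pos)]
      exact_mod_cast (k + m).factorial_pos
    calc (C0 * (r ^ m / (m.factorial : ℝ))) * (1 / ((k + m).factorial : ℝ))
        ≤ (C0 * (r ^ m / (m.factorial : ℝ))) * 1 := by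
          apply mul_le_mul_of_nonneg_left h2 (by positivity)
      _ = C0 * (r ^ m / (m.factorial : ℝ)) := by ring
  -- pointwise convergence
  have hpt : ∀ m : ℕ, Tendsto (fun n : ℕ => plf N c k n m) atTop (nhds (a m)) := by
    intro m
    have hA : Tendsto (fun n : ℕ => ((1 + N * (c / (n : ℝ))) ^ (2 * n + k + 1))⁻¹) atTop
        (nhds (Real.exp (-(2 * N * c)))) := by
      have hb0 : Tendsto (fun n : ℕ => 1 + N * (c / (n : ℝ))) atTop (nhds 1) := by
        have h := tendsto_const_nhds (α := ℕ) (f := atTop) (x := (1:ℝ)) |>.add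
          (tendsto_const_div_atTop_nhds_zero_nat (N * c))
        simpa [mul_div_assoc] using h
      have h1 : Tendsto (fun n : ℕ => (1 + N * (c / (n : ℝ))) ^ n) atTop
          (nhds (Real.exp (N * c))) :=
        (Real.tendsto_one_add_div_pow_exp (N * c)).congr (fun n => by rw [mul_div_assoc])
      have h2 := (h1.mul h1).mul (hb0.pow (k + 1))
      have h3 : Tendsto (fun n : ℕ => (1 + N * (c / (n : ℝ))) ^ (2 * n + k + 1)) atTop
          (nhds (Real.exp (2 * N * c))) := by
        have heq : ∀ n : ℕ, (1 + N * (c / (n : ℝ))) ^ n * (1 + N * (c / (n : ℝ))) ^ n *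
            (1 + N * (c / (n : ℝ))) ^ (k + 1) = (1 + N * (c / (n : ℝ))) ^ (2 * n + k + 1) :=
          fun n => by rw [← pow_add, ← pow_add]; congr 1; omega
        have hv : Real.exp (N * c) * Real.exp (N * c) * (1:ℝ) ^ (k + 1)
            = Real.exp (2 * N * c) := by
          rw [one_pow, mul_one, ← Real.exp_add]; ring_nf
        exact hv ▸ h2.congr heq
      have := h3.inv₀ (Real.exp_ne_zero _)
      rwa [← Real.exp_neg] at this
    have hB : Tendsto (fun n : ℕ => (1 - c / (n : ℝ)) ^ (n - m)) atTop
        (nhds (Real.exp (-c))) := by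
      have hs : Tendsto (fun n : ℕ => (1 - c / (n : ℝ)) ^ n) atTop (nhds (Real.exp (-c))) :=
        (Real.tendsto_one_add_div_pow_exp (-c)).congr (fun n => by rw [neg_div, ← sub_eq_add_neg])
      have hm1 : Tendsto (fun n : ℕ => (1 - c / (n : ℝ)) ^ m) atTop (nhds 1) := by
        have hb : Tendsto (fun n : ℕ => 1 - c / (n : ℝ)) atTop (nhds 1) := by
          simpa using tendsto_const_nhds (α := ℕ) (f := atTop) (x := (1:ℝ)) |>.sub hcn
        simpa using hb.pow m
      have hd := hs.div hm1 one_ne_zero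
      rw [div_one] at hd
      refine hd.congr' ?_
      filter_upwards [eventually_ge_atTop m, hcn.eventually_lt_const one_pos] with n hnm hlt
      simp only [Pi.div_apply]
      rw [pow_sub₀ _ (by intro h; rw [sub_eq_zero] at h; rw [← h] at hlt; linarith : (1:ℝ) - c / n ≠ 0) hnm, div_eq_mul_inv]
    have hC : Tendsto (fun n : ℕ => (c / (n : ℝ)) ^ (2 * m + k) * (n.choose m : ℝ) *
        ((n + k).choose (n - m) : ℝ)) atTop
        (nhds (c ^ (2 * m + k) * (1 / (m.factorial : ℝ)) * (1 / ((k + m).factorial : ℝ)))) := by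
      have h1 : Tendsto (fun n : ℕ => (n.choose m : ℝ) / (n : ℝ) ^ m) atTop
          (nhds (1 / (m.factorial : ℝ))) := by simpa using aux_choose_tendsto 0 m
      have h2 := aux_choose_tendsto k (k + m)
      have h3 := (h1.const_mul (c ^ (2 * m + k))).mul h2
      refine h3.congr' ?_
      filter_upwards [eventually_ge_atTop (max 1 m)] with n hn
      have hn1 : 1 ≤ n := le_of_max_le_left hn
      have hnm : m ≤ n := le_of_max_le_right hn
      have hn0 : (n : ℝ) ≠ 0 := Nat.cast_ne_zero.mpr (by omega)
      have hcs : (n + k).choose (n - m) = (n + k).choose (k + m) := by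
        rw [show n - m = (n + k) - (k + m) from by omega]
        exact Nat.choose_symm (by omega)
      have hnn : (n : ℝ) ^ m * (n : ℝ) ^ (k + m) = (n : ℝ) ^ (2 * m + k) := by
        rw [← pow_add]; congr 1; omega
      rw [hcs, div_pow, ← hnn]
      field_simp
    have hAll := (hA.mul (hB.mul hC)).mul_const (N ^ (k + m) * (N + 1) ^ m)
    have hval : Real.exp (-(2 * N * c)) * (Real.exp (-c) *
        (c ^ (2 * m + k) * (1 / (m.factorial : ℝ)) * (1 / ((k + m).factorial : ℝ)))) *
        (N ^ (k + m) * (N + 1) ^ m) = a m := by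
      simp only [ha, hE]
      rw [show -c * (2 * N + 1) = -(2 * N * c) + -c from by ring, Real.exp_add,
        show m + k = k + m from by omega,
        show 2 * m + k = k + 2 * m from by omega, pow_add, pow_mul, pow_add, mul_pow, mul_pow,
        mul_pow]
      have hm0 : (m.factorial : ℝ) ≠ 0 := Nat.cast_ne_zero.mpr m.factorial_ne_zero
      have hk0 : ((k + m).factorial : ℝ) ≠ 0 := Nat.cast_ne_zero.mpr (k + m).factorial_ne_zero
      field_simp
    refine (hval ▸ hAll).congr' ?_
    filter_upwards [eventually_ge_atTop m] with n hnm
    simp only [plf, if_pos hnm]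
    ring
  -- domination
  have hbd : ∀ᶠ n : ℕ in atTop, ∀ m : ℕ, ‖plf N c k n m‖ ≤ bound m := by
    filter_upwards [eventually_ge_atTop 1, hcn.eventually_lt_const one_pos] with n hn1 hlt
    intro m
    by_cases hmn : m ≤ n
    · have hn0 : (0:ℝ) < (n : ℝ) := by exact_mod_cast hn1
      have h0 : (0:ℝ) ≤ c / n := le_of_lt (div_pos hc hn0)
      have h1 : (0:ℝ) ≤ 1 - c / n := by linarith
      have hpre : ((1 + N * (c / (n : ℝ))) ^ (2 * n + k + 1))⁻¹ ≤ 1 := by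
        rw [inv_le_one_iff₀]
        right
        exact one_le_pow₀ (by nlinarith)
      have hprene : (0:ℝ) ≤ ((1 + N * (c / (n : ℝ))) ^ (2 * n + k + 1))⁻¹ := by positivity
      have hplf : plf N c k n m = ((1 + N * (c / n)) ^ (2 * n + k + 1))⁻¹ *
          ((c / n) ^ (2 * m + k) * (1 - c / n) ^ (n - m) * N ^ (k + m) * (N + 1) ^ m *
          (n.choose m : ℝ) * ((n + k).choose (n - m) : ℝ)) := by
        simp only [plf, if_pos hmn]
      have hnn : (0:ℝ) ≤ plf N c k n m := by
        rw [hplf]; positivity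
      rw [Real.norm_eq_abs, abs_of_nonneg hnn, hplf]
      have hcs : (n + k).choose (n - m) = (n + k).choose (k + m) := by
        rw [show n - m = (n + k) - (k + m) from by omega]
        exact Nat.choose_symm (by omega)
      have hch1 : (n.choose m : ℝ) ≤ (n : ℝ) ^ m / (m.factorial : ℝ) := aux_choose_le n m
      have hch2 : ((n + k).choose (n - m) : ℝ)
          ≤ ((n : ℝ) * (1 + k)) ^ (k + m) / ((k + m).factorial : ℝ) := by
        rw [hcs]
        refine (aux_choose_le (n + k) (k + m)).trans ?_
        have hfp : (0:ℝ) < ((k + m).factorial : ℝ) := by exact_mod_cast (k + m).factorial_pos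
        have hcast : ((n + k : ℕ) : ℝ) = (n : ℝ) + k := by push_cast; ring
        rw [hcast]
        have hbase : ((n : ℝ) + k) ≤ (n : ℝ) * (1 + k) := by
          have : (1:ℝ) ≤ (n : ℝ) := by exact_mod_cast hn1
          nlinarith
        gcongr
      have hone : (1 - c / (n : ℝ)) ^ (n - m) ≤ 1 :=
        pow_le_one₀ h1 (by linarith)
      calc ((1 + N * (c / (n : ℝ))) ^ (2 * n + k + 1))⁻¹ *
          ((c / n) ^ (2 * m + k) * (1 - c / n) ^ (n - m) * N ^ (k + m) * (N + 1) ^ m *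
          (n.choose m : ℝ) * ((n + k).choose (n - m) : ℝ))
          ≤ 1 * ((c / n) ^ (2 * m + k) * 1 * N ^ (k + m) * (N + 1) ^ m *
            ((n : ℝ) ^ m / (m.factorial : ℝ)) *
            (((n : ℝ) * (1 + k)) ^ (k + m) / ((k + m).factorial : ℝ))) := by
            gcongr
        _ = bound m := by
            simp only [hbound]
            have hnn : (n : ℝ) ^ m * (n : ℝ) ^ (k + m) = (n : ℝ) ^ (2 * m + k) := by
              rw [← pow_add]; congr 1; omega
            rw [div_pow, mul_pow, one_mul]
            have hm0 : (m.factorial : ℝ) ≠ 0 := Nat.cast_ne_zero.mpr m.factorial_ne_zero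
            have hk0 : ((k + m).factorial : ℝ) ≠ 0 := Nat.cast_ne_zero.mpr (k + m).factorial_ne_zero
            have hne : (n : ℝ) ≠ 0 := ne_of_gt hn0
            field_simp
            rw [← hnn]
    · simp only [plf, if_neg hmn, norm_zero]
      positivity
  have key := tendsto_tsum_of_dominated_convergence hb_sum hpt hbd
  -- identify the sum of limits with the target
  have htsum : ∑' m, a m = E * ∑' m : ℕ, (c ^ 2 * N * (N + 1)) ^ m /
      ((m.factorial : ℝ) * ((m + k).factorial : ℝ)) := tsum_mul_left
  rw [htsum] at key
  -- eventual equality with Pl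
  refine key.congr' ?_
  filter_upwards [eventually_ge_atTop 1] with n hn1
  have hzero : ∀ m ∉ Finset.Icc 0 n, plf N c k n m = 0 := by
    intro m hm
    simp only [Finset.mem_Icc, Nat.zero_le, true_and, not_le] at hm
    simp only [plf, if_neg (by omega : ¬ m ≤ n)]
  rw [tsum_eq_sum hzero]
  unfold Pl
  rw [show n - (n + k) = 0 from by omega, Finset.mul_sum]
  refine (Finset.sum_congr rfl fun m hm => ?_).symm
  have hm' : m ≤ n := (Finset.mem_Icc.mp hm).2
  simp only [plf, if_pos hm']
  rw [show 2 * m + (n + k) - n = 2 * m + k from by omega,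
    show n + k + m - n = k + m from by omega,
    show n + k + n + 1 = 2 * n + k + 1 from by omega]
end

section
/- For every real N > 0, every real c > 0 and every integer k ≥ 0, the limit as n → ∞ (over integers n ≥ k with n > c) of P_{n−k}(N,n,c/n) exists and equals e^{−c(2N+1)} (c(N+1))^k Σ_{m=0}^∞ (c²N(N+1))^m / (m!(m+k)!). -/
open Filter Finset Real Topology

noncomputable def fTerm (N c : ℝ) (k n j : ℕ) : ℝ :=
  (c / n) ^ (2 * j + k) * (1 - c / n) ^ (n - k - j) * N ^ j * (N + 1) ^ (j + k) *
    (n.choose (j + k) : ℝ) * ((n - k).choose j : ℝ)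

lemma aux_choose_div_pow (r : ℕ) :
    Filter.Tendsto (fun n : ℕ => (n.choose r : ℝ) / (n : ℝ) ^ r) atTop
      (𝓝 (1 / (r.factorial : ℝ))) := by
  have key : (fun n : ℕ => (∏ i ∈ range r, (1 - (i : ℝ) / n)) / (r.factorial : ℝ))
      =ᶠ[atTop] fun n : ℕ => (n.choose r : ℝ) / (n : ℝ) ^ r := by
    filter_upwards [eventually_ge_atTop r, eventually_ge_atTop 1] with n hn h1
    have hn0 : (0 : ℝ) < n := by exact_mod_cast h1
    have hd : ((n.descFactorial r : ℕ) : ℝ) = ∏ i ∈ range r, ((n : ℝ) - i) := by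
      rw [Nat.descFactorial_eq_prod_range, Nat.cast_prod]
      exact Finset.prod_congr rfl fun i hi => by
        rw [Nat.cast_sub (le_trans (Finset.mem_range.1 hi).le hn)]
    have hc : (n.choose r : ℝ) = (∏ i ∈ range r, ((n : ℝ) - i)) / (r.factorial : ℝ) := by
      rw [← hd, Nat.descFactorial_eq_factorial_mul_choose, Nat.cast_mul, mul_comm,
        mul_div_assoc, div_self (by exact_mod_cast r.factorial_pos.ne'), mul_one]
    have hp : ∏ i ∈ range r, (1 - (i : ℝ) / n) = (∏ i ∈ range r, ((n : ℝ) - i)) / (n : ℝ) ^ r := by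
      rw [show (∏ i ∈ range r, (1 - (i : ℝ) / n)) = ∏ i ∈ range r, (((n : ℝ) - i) / n) from
        Finset.prod_congr rfl fun i _ => by field_simp,
        Finset.prod_div_distrib, Finset.prod_const, Finset.card_range]
    rw [hc, hp]; ring
  refine Tendsto.congr' key ?_
  have : Filter.Tendsto (fun n : ℕ => ∏ i ∈ range r, (1 - (i : ℝ) / n)) atTop
      (𝓝 (∏ i ∈ range r, (1 : ℝ))) := by
    refine tendsto_finset_prod _ fun i _ => ?_
    simpa using (tendsto_const_div_atTop_nhds_zero_nat (i : ℝ)).const_sub 1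
  simpa using this.div_const (r.factorial : ℝ)

lemma aux_term_tendsto (N c : ℝ) (hc : 0 < c) (k j : ℕ) :
    Filter.Tendsto (fun n : ℕ => fTerm N c k n j) atTop
      (𝓝 (Real.exp (-c) * c ^ (2 * j + k) * N ^ j * (N + 1) ^ (j + k) /
        (((j + k).factorial : ℝ) * (j.factorial : ℝ)))) := by
  have h4 : Filter.Tendsto (fun n : ℕ => 1 - c / (n : ℝ)) atTop (𝓝 1) := by
    simpa using (tendsto_const_div_atTop_nhds_zero_nat c).const_sub 1
  have h5 : Filter.Tendsto (fun n : ℕ => (1 - c / (n : ℝ)) ^ n) atTop (𝓝 (Real.exp (-c))) :=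
    (Real.tendsto_one_add_div_pow_exp (-c)).congr fun n => by rw [neg_div, ← sub_eq_add_neg]
  have h2 : Filter.Tendsto (fun n : ℕ => (((n - k).choose j : ℕ) : ℝ) / ((n - k : ℕ) : ℝ) ^ j)
      atTop (𝓝 (1 / (j.factorial : ℝ))) :=
    (aux_choose_div_pow j).comp (tendsto_sub_atTop_nat k)
  have h3 : Filter.Tendsto (fun n : ℕ => ((n - k : ℕ) : ℝ) / (n : ℝ)) atTop (𝓝 1) := by
    have base : Filter.Tendsto (fun n : ℕ => 1 - (k : ℝ) / n) atTop (𝓝 1) := by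
      simpa using (tendsto_const_div_atTop_nhds_zero_nat (k : ℝ)).const_sub 1
    refine base.congr' ?_
    filter_upwards [eventually_ge_atTop (k + 1)] with n hn
    have hn0 : (0 : ℝ) < n := by exact_mod_cast (by omega : 0 < n)
    rw [Nat.cast_sub (by omega)]
    field_simp
  have hlim : Filter.Tendsto (fun n : ℕ =>
      c ^ (2 * j + k) * N ^ j * (N + 1) ^ (j + k) *
        ((n.choose (j + k) : ℝ) / (n : ℝ) ^ (j + k)) *
        ((((n - k).choose j : ℕ) : ℝ) / ((n - k : ℕ) : ℝ) ^ j) *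
        (((n - k : ℕ) : ℝ) / (n : ℝ)) ^ j *
        ((1 - c / (n : ℝ)) ^ n / (1 - c / (n : ℝ)) ^ (k + j))) atTop
      (𝓝 (c ^ (2 * j + k) * N ^ j * (N + 1) ^ (j + k) * (1 / ((j + k).factorial : ℝ)) *
        (1 / (j.factorial : ℝ)) * 1 ^ j * (Real.exp (-c) / 1 ^ (k + j)))) := by
    exact ((((tendsto_const_nhds.mul (aux_choose_div_pow (j + k))).mul h2).mul
      (h3.pow j)).mul (h5.div (h4.pow (k + j)) (by norm_num)))
  have heq : (𝓝 (c ^ (2 * j + k) * N ^ j * (N + 1) ^ (j + k) * (1 / ((j + k).factorial : ℝ)) *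
        (1 / (j.factorial : ℝ)) * 1 ^ j * (Real.exp (-c) / 1 ^ (k + j)))) =
      (𝓝 (Real.exp (-c) * c ^ (2 * j + k) * N ^ j * (N + 1) ^ (j + k) /
        (((j + k).factorial : ℝ) * (j.factorial : ℝ)))) := by
    congr 1
    rw [one_pow, one_pow, div_one]
    ring
  rw [heq] at hlim
  refine hlim.congr' ?_
  filter_upwards [eventually_ge_atTop (k + j + ⌈c⌉₊ + 1)] with n hn
  have hn0 : (0 : ℝ) < n := by
    have : 1 ≤ n := by omega
    exact_mod_cast Nat.lt_of_lt_of_le Nat.zero_lt_one this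
  have hcn : c < n := by
    have h1 : c ≤ (⌈c⌉₊ : ℝ) := Nat.le_ceil c
    have h2 : (⌈c⌉₊ : ℝ) < n := by exact_mod_cast (by omega : ⌈c⌉₊ < n)
    linarith
  have hne : (1 : ℝ) - c / n ≠ 0 := by
    have : c / n < 1 := (div_lt_one hn0).2 hcn
    linarith
  have hnk0 : (0 : ℝ) < ((n - k : ℕ) : ℝ) := by
    have : 1 ≤ n - k := by omega
    exact_mod_cast Nat.lt_of_lt_of_le Nat.zero_lt_one this
  have e1 : (1 - c / (n : ℝ)) ^ n = (1 - c / (n : ℝ)) ^ (n - k - j) * (1 - c / (n : ℝ)) ^ (k + j) := by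
    rw [← pow_add]; congr 1; omega
  have hx : (1 - c / (n : ℝ)) ^ n / (1 - c / (n : ℝ)) ^ (k + j)
      = (1 - c / (n : ℝ)) ^ (n - k - j) := by
    rw [e1, mul_div_cancel_right₀ _ (pow_ne_zero _ hne)]
  unfold fTerm
  rw [hx]
  generalize (1 - c / (n : ℝ)) ^ (n - k - j) = X
  have hn' : (n : ℝ) ≠ 0 := hn0.ne'
  field_simp
  ring_nf
  have e : (n:ℝ) ^ j * (n:ℝ) ^ k * ((n:ℝ))⁻¹ ^ (j * 2) * ((n:ℝ))⁻¹ ^ k = (n:ℝ)⁻¹ ^ j := by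
    simp only [inv_pow]; field_simp; ring
  linear_combination (-(c ^ (j * 2) * c ^ k * N ^ j * ((n.choose (j + k) : ℕ) : ℝ) *
    (((n - k).choose j : ℕ) : ℝ) * ((n - k : ℕ) : ℝ) ^ j * X * (1 + N) ^ j * (1 + N) ^ k)) * e

lemma aux_term_bound (N c : ℝ) (hN : 0 < N) (hc : 0 < c) (k : ℕ) :
    ∀ᶠ n : ℕ in atTop, ∀ j : ℕ, ‖fTerm N c k n j‖ ≤
      c ^ k * (N + 1) ^ k * ((c ^ 2 * N * (N + 1)) ^ j / (j.factorial : ℝ)) := by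
  filter_upwards [eventually_ge_atTop (k + ⌈c⌉₊ + 1)] with n hn j
  have hn0 : (0 : ℝ) < n := by exact_mod_cast (by omega : 0 < n)
  have hcn : c < n := by
    have h1 : c ≤ (⌈c⌉₊ : ℝ) := Nat.le_ceil c
    have h2 : (⌈c⌉₊ : ℝ) < n := by exact_mod_cast (by omega : ⌈c⌉₊ < n)
    linarith
  have h1 : (0 : ℝ) ≤ 1 - c / n := by
    have : c / n < 1 := (div_lt_one hn0).2 hcn
    linarith
  have h1' : (1 : ℝ) - c / n ≤ 1 := by
    have : 0 < c / n := by positivity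
    linarith
  have habs : ‖fTerm N c k n j‖ = fTerm N c k n j := by
    rw [Real.norm_eq_abs, abs_of_nonneg]
    unfold fTerm
    have := pow_nonneg h1 (n - k - j)
    positivity
  rw [habs]
  have step1 : fTerm N c k n j ≤
      (c / n) ^ (2 * j + k) * 1 * N ^ j * (N + 1) ^ (j + k) *
        ((n : ℝ) ^ (j + k) / ((j + k).factorial : ℝ)) * ((n : ℝ) ^ j / (j.factorial : ℝ)) := by
    unfold fTerm
    gcongr
    · exact pow_le_one₀ h1 h1'
    · exact Nat.choose_le_pow_div (j + k) n
    · calc ((n - k).choose j : ℝ) ≤ ((n - k : ℕ) : ℝ) ^ j / (j.factorial : ℝ) :=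
          Nat.choose_le_pow_div j (n - k)
        _ ≤ (n : ℝ) ^ j / (j.factorial : ℝ) := by
          gcongr
          exact_mod_cast Nat.sub_le n k
  refine step1.trans ?_
  have step2 : (c / n) ^ (2 * j + k) * 1 * N ^ j * (N + 1) ^ (j + k) *
      ((n : ℝ) ^ (j + k) / ((j + k).factorial : ℝ)) * ((n : ℝ) ^ j / (j.factorial : ℝ)) =
      (c ^ k * (N + 1) ^ k * ((c ^ 2 * N * (N + 1)) ^ j / (j.factorial : ℝ))) /
        ((j + k).factorial : ℝ) := by
    rw [show (c ^ 2 * N * (N + 1)) ^ j = (c ^ 2) ^ j * N ^ j * (N + 1) ^ j by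
      rw [mul_pow, mul_pow]]
    have hn' : (n : ℝ) ≠ 0 := hn0.ne'
    field_simp
    ring_nf
    simp only [inv_pow]; field_simp
  rw [step2]
  refine div_le_self ?_ ?_
  · positivity
  · exact_mod_cast (j + k).factorial_pos

lemma aux_Pl_eq (N c : ℝ) (hN : 0 < N) (hc : 0 < c) (k : ℕ) :
    ∀ᶠ n : ℕ in atTop, Pl N n (n - k) (c / n) =
      ((1 + N * (c / n)) ^ k / ((1 + N * (c / n)) ^ n) ^ 2 / (1 + N * (c / n))) *
        ∑' j : ℕ, fTerm N c k n j := by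
  filter_upwards [eventually_ge_atTop (k + 1)] with n hn
  have hn0 : (0 : ℝ) < n := by exact_mod_cast (by omega : 0 < n)
  have hx0 : (0 : ℝ) < 1 + N * (c / n) := by positivity
  -- the tsum is a finite sum
  have htsum : ∑' j : ℕ, fTerm N c k n j = ∑ j ∈ range (n - k + 1), fTerm N c k n j := by
    refine tsum_eq_sum fun j hj => ?_
    have : n - k < j := by
      by_contra h
      exact hj (Finset.mem_range.2 (by omega))
    unfold fTerm
    rw [Nat.choose_eq_zero_of_lt this]
    simp
  rw [htsum]
  unfold Pl
  have hsub : n - (n - k) = k := by omega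
  rw [hsub]
  -- prefactor
  have hpref : ((1 + N * (c / n)) ^ ((n - k) + n + 1))⁻¹ =
      (1 + N * (c / n)) ^ k / ((1 + N * (c / n)) ^ n) ^ 2 / (1 + N * (c / n)) := by
    rw [div_div, inv_eq_one_div, div_eq_div_iff (by positivity) (by positivity), one_mul,
      ← pow_mul, ← pow_succ, ← pow_add]
    congr 1
    omega
  rw [hpref]
  congr 1
  -- reindex the sum
  refine Finset.sum_nbij' (fun m => m - k) (fun j => j + k) ?_ ?_ ?_ ?_ ?_
  · intro m hm
    rw [Finset.mem_Icc] at hm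
    show m - k ∈ range (n - k + 1)
    exact Finset.mem_range.2 (by omega)
  · intro j hj
    rw [Finset.mem_range] at hj
    show j + k ∈ Finset.Icc k n
    exact Finset.mem_Icc.2 (by omega)
  · intro m hm
    rw [Finset.mem_Icc] at hm
    show m - k + k = m
    omega
  · intro j hj
    show j + k - k = j
    omega
  · intro m hm
    rw [Finset.mem_Icc] at hm
    show _ = fTerm N c k n (m - k)
    unfold fTerm
    rw [show 2 * (m - k) + k = 2 * m + (n - k) - n by omega,
      show n - k - (m - k) = n - m by omega,
      show m - k + k = m by omega,
      show (n - k) + m - n = m - k by omega,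
      show (n - k).choose (m - k) = (n - k).choose (n - m) by
        rw [show n - m = (n - k) - (m - k) by omega]
        exact (Nat.choose_symm (by omega)).symm]

/-- For every `N > 0`, `c > 0` and integer `k ≥ 0`, the limit as `n → ∞` of
`P_{n−k}(N,n,c/n)` exists and equals
`e^{−c(2N+1)} (c(N+1))^k Σ_{m=0}^∞ (c²N(N+1))^m / (m!(m+k)!)`. -/
theorem tendsto_Pl_shifted_neg (N c : ℝ) (hN : 0 < N) (hc : 0 < c) (k : ℕ) :
    Filter.Tendsto (fun n : ℕ => Pl N n (n - k) (c / n)) Filter.atTop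
      (nhds (Real.exp (-c * (2 * N + 1)) * (c * (N + 1)) ^ k *
        ∑' m : ℕ, (c ^ 2 * N * (N + 1)) ^ m /
          ((m.factorial : ℝ) * ((m + k).factorial : ℝ)))) := by
  have hx : Filter.Tendsto (fun n : ℕ => 1 + N * (c / n)) atTop (𝓝 1) := by
    have h0 : Filter.Tendsto (fun n : ℕ => (N * c) / n) atTop (𝓝 0) :=
      tendsto_const_div_atTop_nhds_zero_nat _
    have := h0.const_add 1
    simp only [add_zero] at this
    exact this.congr fun n => by rw [mul_div_assoc]
  have hxn : Filter.Tendsto (fun n : ℕ => (1 + N * (c / n)) ^ n) atTop (𝓝 (Real.exp (N * c))) :=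
    (Real.tendsto_one_add_div_pow_exp (N * c)).congr fun n => by rw [mul_div_assoc]
  have hA : Filter.Tendsto
      (fun n : ℕ => (1 + N * (c / n)) ^ k / ((1 + N * (c / n)) ^ n) ^ 2 / (1 + N * (c / n)))
      atTop (𝓝 ((1 : ℝ) ^ k / (Real.exp (N * c)) ^ 2 / 1)) :=
    ((hx.pow k).div (hxn.pow 2) (by positivity)).div hx one_ne_zero
  have hsum : Summable (fun j : ℕ => c ^ k * (N + 1) ^ k *
      ((c ^ 2 * N * (N + 1)) ^ j / (j.factorial : ℝ))) :=
    (Real.summable_pow_div_factorial _).mul_left _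
  have hS : Filter.Tendsto (fun n : ℕ => ∑' j : ℕ, fTerm N c k n j) atTop
      (𝓝 (∑' j : ℕ, Real.exp (-c) * c ^ (2 * j + k) * N ^ j * (N + 1) ^ (j + k) /
        (((j + k).factorial : ℝ) * (j.factorial : ℝ)))) :=
    tendsto_tsum_of_dominated_convergence hsum (fun j => aux_term_tendsto N c hc k j)
      (aux_term_bound N c hN hc k)
  have hmul := hA.mul hS
  have hPl := hmul.congr' (EventuallyEq.symm (aux_Pl_eq N c hN hc k))
  have hval : (1 : ℝ) ^ k / (Real.exp (N * c)) ^ 2 / 1 *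
      ∑' j : ℕ, Real.exp (-c) * c ^ (2 * j + k) * N ^ j * (N + 1) ^ (j + k) /
        (((j + k).factorial : ℝ) * (j.factorial : ℝ)) =
      Real.exp (-c * (2 * N + 1)) * (c * (N + 1)) ^ k *
        ∑' m : ℕ, (c ^ 2 * N * (N + 1)) ^ m /
          ((m.factorial : ℝ) * ((m + k).factorial : ℝ)) := by
    have hts : ∀ j : ℕ, Real.exp (-c) * c ^ (2 * j + k) * N ^ j * (N + 1) ^ (j + k) /
        (((j + k).factorial : ℝ) * (j.factorial : ℝ)) =
        (Real.exp (-c) * c ^ k * (N + 1) ^ k) *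
          ((c ^ 2 * N * (N + 1)) ^ j / ((j.factorial : ℝ) * ((j + k).factorial : ℝ))) := by
      intro j
      rw [show (c ^ 2 * N * (N + 1)) ^ j = (c ^ 2) ^ j * N ^ j * (N + 1) ^ j by
        rw [mul_pow, mul_pow]]
      have h1 : ((j + k).factorial : ℝ) ≠ 0 := Nat.cast_ne_zero.2 (Nat.factorial_ne_zero _)
      have h2 : ((j.factorial : ℕ) : ℝ) ≠ 0 := Nat.cast_ne_zero.2 (Nat.factorial_ne_zero _)
      field_simp
      ring
    rw [tsum_congr hts, tsum_mul_left, ← mul_assoc]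
    congr 1
    · rw [one_pow, div_one]
      have he : Real.exp (-c * (2 * N + 1)) = Real.exp (-c) / (Real.exp (N * c)) ^ 2 := by
        rw [sq, ← Real.exp_add, ← Real.exp_sub]
        congr 1
        ring
      rw [he, mul_pow]
      ring
  rw [← hval]
  exact hPl
end

section
/- For every real N > 0, every real c > 0 and every integer k ≥ 0, the limit as n → ∞ (over integers n > c) of P_k(N,n,1−c/n) exists and equals (N^k/(N+1)^{k+1}) · e^{−c/(N+1)} · Σ_{m=0}^{k} binom(k,m) (c/(N(N+1)))^m / m!, i.e. (N^k/(N+1)^{k+1}) e^{−c/(N+1)} L_k(−c/(N(N+1))) where L_k is the k-th Laguerre polynomial. -/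
open Filter Real

private lemma aux_exp (d : ℝ) (a : ℕ) :
    Tendsto (fun n : ℕ => (1 + d / (n:ℝ)) ^ (n + a)) atTop (nhds (Real.exp d)) := by
  have h0 : Tendsto (fun n : ℕ => (1 + d/(n:ℝ))) atTop (nhds 1) := by
    simpa using tendsto_const_nhds.add (tendsto_const_div_atTop_nhds_zero_nat d)
  have h2 : Tendsto (fun n : ℕ => (1 + d/(n:ℝ))^a) atTop (nhds 1) := by
    simpa using h0.pow a
  have := (Real.tendsto_one_add_div_pow_exp d).mul h2
  simpa [pow_add] using this

private lemma aux_choose (c : ℝ) (j : ℕ) :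
    Tendsto (fun n : ℕ => (n.choose j : ℝ) * (c/(n:ℝ))^j) atTop
      (nhds (c^j / (j.factorial : ℝ))) := by
  have heq : ∀ᶠ n : ℕ in atTop,
      (n.choose j : ℝ) * (c/(n:ℝ))^j
        = (∏ i ∈ Finset.range j, (1 - (i:ℝ)/(n:ℝ))) * (c^j / (j.factorial : ℝ)) := by
    filter_upwards [eventually_ge_atTop (j+1)] with n hn
    have hn0 : (n:ℝ) ≠ 0 := by
      have : 0 < n := by omega
      exact_mod_cast this.ne'
    have h1 : (j.factorial : ℝ) * (n.choose j : ℝ) = ∏ i ∈ Finset.range j, ((n:ℝ) - (i:ℝ)) := by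
      rw [← Nat.cast_mul, ← Nat.descFactorial_eq_factorial_mul_choose,
        Nat.descFactorial_eq_prod_range, Nat.cast_prod]
      refine Finset.prod_congr rfl fun i hi => ?_
      have : i ≤ n := by simp at hi; omega
      exact Nat.cast_sub this
    have h2 : ∏ i ∈ Finset.range j, (1 - (i:ℝ)/(n:ℝ))
        = (∏ i ∈ Finset.range j, ((n:ℝ) - (i:ℝ))) / (n:ℝ)^j := by
      rw [show ((n:ℝ))^j = ∏ _i ∈ Finset.range j, (n:ℝ) by simp, ← Finset.prod_div_distrib]
      refine Finset.prod_congr rfl fun i _ => ?_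
      rw [sub_div, div_self hn0]
    rw [h2, ← h1]
    have hj : (j.factorial : ℝ) ≠ 0 := by exact_mod_cast j.factorial_ne_zero
    field_simp
    ring_nf
    rw [mul_assoc, ← mul_pow, mul_inv_cancel₀ hn0, one_pow, mul_one]
  refine Filter.Tendsto.congr' (Filter.EventuallyEq.symm heq) ?_
  have hp : Tendsto (fun n : ℕ => ∏ i ∈ Finset.range j, (1 - (i:ℝ)/(n:ℝ))) atTop (nhds 1) := by
    have : Tendsto (fun n : ℕ => ∏ i ∈ Finset.range j, (1 - (i:ℝ)/(n:ℝ))) atTop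
        (nhds (∏ i ∈ Finset.range j, (1:ℝ))) := by
      refine tendsto_finset_prod _ fun i _ => ?_
      simpa using tendsto_const_nhds.sub (tendsto_const_div_atTop_nhds_zero_nat (i:ℝ))
    simpa using this
  simpa using hp.mul (tendsto_const_nhds (x := c^j / (j.factorial : ℝ)))

private noncomputable def G (N c : ℝ) (k j n : ℕ) : ℝ :=
  ((1 + (-(N*c)/(N+1)) / (n:ℝ)) ^ (n + (k+1)))⁻¹ *
    ((1 - c/(n:ℝ))^n * ((1 - c/(n:ℝ))^k * ((1 - c/(n:ℝ))^(2*j))⁻¹)) *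
    ((n.choose j : ℝ) * (c/(n:ℝ))^j) *
    (((N+1)^(k+1+j))⁻¹ * N^(k-j) * (k.choose j : ℝ))

private lemma Pl_eq (N c : ℝ) (hN : 0 < N) (hc : 0 < c) (k n : ℕ) (h1 : 2*k + 1 ≤ n)
    (h2 : c < (n:ℝ)) :
    Pl N n k (1 - c/(n:ℝ)) = ∑ j ∈ Finset.range (k+1), G N c k j n := by
  have hn0 : (0:ℝ) < (n:ℝ) := lt_trans hc h2
  set x : ℝ := (n:ℝ) with hx
  have hlam : 0 < 1 - c/x := by
    have : c/x < 1 := (div_lt_one hn0).2 h2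
    linarith
  have hN1 : (0:ℝ) < N + 1 := by linarith
  have hfact : 1 + N * (1 - c/x) = (N+1) * (1 + (-(N*c)/(N+1)) / x) := by
    field_simp
    ring
  have hd : 0 < 1 + (-(N*c)/(N+1)) / x := by
    nlinarith [mul_pos hN hlam, mul_pos hN1 (show (0:ℝ) < 1 + N*(1-c/x) by nlinarith [mul_pos hN hlam])]
  rw [Pl, Finset.mul_sum]
  refine Finset.sum_nbij' (fun m => n - m) (fun j => n - j) ?_ ?_ ?_ ?_ ?_
  · intro m hm; simp [Finset.mem_Icc, Finset.mem_range] at *; omega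
  · intro j hj; simp [Finset.mem_Icc, Finset.mem_range] at *; omega
  · intro m hm; show n - (n - m) = m; simp [Finset.mem_Icc] at hm; omega
  · intro j hj; show n - (n - j) = j; simp [Finset.mem_range] at hj; omega
  · intro m hm
    simp only [Finset.mem_Icc] at hm
    obtain ⟨hm1, hm2⟩ := hm
    rw [G]
    have e1 : 2 * m + k - n = (n + k) - 2 * (n - m) := by omega
    have e2 : k + m - n = k - (n - m) := by omega
    have e3 : n.choose m = n.choose (n - m) := by rw [Nat.choose_symm hm2]
    have e4 : k + 1 + (n - m) = (k + n + 1) - m := by omega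
    have e5 : 1 - (1 - c/x) = c/x := by ring
    rw [e1, e2, e3, e4, e5, hfact]
    have hlne : (1 - c/x) ≠ 0 := hlam.ne'
    have hdne : (1 + (-(N*c)/(N+1)) / x) ≠ 0 := hd.ne'
    have hN1ne : N + 1 ≠ 0 := hN1.ne'
    rw [pow_sub₀ _ hlne (by omega : 2*(n-m) ≤ n + k),
        pow_sub₀ _ hN1ne (by omega : m ≤ k + n + 1),
        mul_pow]
    rw [mul_inv, mul_inv, inv_inv]
    ring

/-- For every `N > 0`, `c > 0` and integer `k ≥ 0`, the limit as `n → ∞` of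
`P_k(N,n,1−c/n)` exists and equals
`(N^k/(N+1)^{k+1}) e^{−c/(N+1)} Σ_{m=0}^{k} binom(k,m) (c/(N(N+1)))^m / m!`. -/
theorem tendsto_Pl_fixed (N c : ℝ) (hN : 0 < N) (hc : 0 < c) (k : ℕ) :
    Filter.Tendsto (fun n : ℕ => Pl N n k (1 - c / n)) Filter.atTop
      (nhds (N ^ k / (N + 1) ^ (k + 1) * Real.exp (-c / (N + 1)) *
        ∑ m ∈ Finset.range (k + 1),
          (k.choose m : ℝ) * (c / (N * (N + 1))) ^ m / (m.factorial : ℝ))) := by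
  have hN1 : (0:ℝ) < N + 1 := by linarith
  rw [Finset.mul_sum]
  have hev : ∀ᶠ n : ℕ in atTop,
      (fun n : ℕ => ∑ j ∈ Finset.range (k+1), G N c k j n) n
        = (fun n : ℕ => Pl N n k (1 - c / n)) n := by
    have h2 : ∀ᶠ n : ℕ in atTop, c < (n:ℝ) :=
      (tendsto_natCast_atTop_atTop (R := ℝ)).eventually_gt_atTop c
    filter_upwards [eventually_ge_atTop (2*k+1), h2] with n hn1 hn2
    exact (Pl_eq N c hN hc k n hn1 hn2).symm
  refine Filter.Tendsto.congr' hev ?_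
  refine tendsto_finset_sum _ fun j hj => ?_
  simp only [Finset.mem_range] at hj
  have hjk : j ≤ k := by omega
  have t1 : Tendsto (fun n:ℕ => ((1 + (-(N*c)/(N+1)) / (n:ℝ)) ^ (n + (k+1)))⁻¹) atTop
      (nhds (Real.exp (-(N*c)/(N+1)))⁻¹) := (aux_exp _ (k+1)).inv₀ (Real.exp_ne_zero _)
  have hbase : Tendsto (fun n:ℕ => 1 - c/(n:ℝ)) atTop (nhds 1) := by
    simpa using tendsto_const_nhds.sub (tendsto_const_div_atTop_nhds_zero_nat c)
  have t2 : Tendsto (fun n:ℕ => (1 - c/(n:ℝ))^n) atTop (nhds (Real.exp (-c))) := by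
    have := aux_exp (-c) 0
    simp only [add_zero] at this
    refine this.congr fun n => ?_
    ring_nf
  have t3 : Tendsto (fun n:ℕ => (1 - c/(n:ℝ))^k) atTop (nhds 1) := by
    simpa using hbase.pow k
  have t4 : Tendsto (fun n:ℕ => ((1 - c/(n:ℝ))^(2*j))⁻¹) atTop (nhds 1) := by
    have : Tendsto (fun n:ℕ => (1 - c/(n:ℝ))^(2*j)) atTop (nhds 1) := by
      simpa using hbase.pow (2*j)
    simpa using this.inv₀ one_ne_zero
  have t5 := aux_choose c j
  have tG : Tendsto (fun n : ℕ => G N c k j n) atTop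
      (nhds ((Real.exp (-(N*c)/(N+1)))⁻¹ * (Real.exp (-c) * (1 * 1)) * (c^j / (j.factorial : ℝ))
        * (((N+1)^(k+1+j))⁻¹ * N^(k-j) * (k.choose j : ℝ)))) := by
    exact ((t1.mul (t2.mul (t3.mul t4))).mul t5).mul tendsto_const_nhds
  convert tG using 2
  have hexp : (Real.exp (-(N*c)/(N+1)))⁻¹ * Real.exp (-c) = Real.exp (-c/(N+1)) := by
    rw [← Real.exp_neg, ← Real.exp_add]
    congr 1
    field_simp
    ring
  have hpow : N^(k-j) = N^k * (N^j)⁻¹ := pow_sub₀ _ hN.ne' hjk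
  rw [hpow, mul_one, mul_one, hexp,
    div_pow, mul_pow, pow_add, pow_add]
  have h1 : (N:ℝ) ≠ 0 := hN.ne'
  have h2 : (N+1:ℝ) ≠ 0 := hN1.ne'
  have h3 : (j.factorial : ℝ) ≠ 0 := by exact_mod_cast j.factorial_ne_zero
  field_simp
  ring
end

section
/- For every real N > 0 and every real c > 0, lim_{n→∞} Σ_{l=0}^∞ | P_l(N,n,1−c/n) − p_l(N,c) | = 0, where the limit is over integers n > c. (This is the trace-norm convergence of the diagonal states Φ_{1−c/n,|n⟩⟨n|}(τ_N) to the diagonal state with eigenvalues p_l(N,c).) -/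
/-- The limiting distribution `p_k(N,c)` on `ℕ`. -/
noncomputable def pdist (N c : ℝ) (k : ℕ) : ℝ :=
  N ^ k / (N + 1) ^ (k + 1) * Real.exp (-c / (N + 1)) *
    ∑ m ∈ Finset.range (k + 1), (k.choose m : ℝ) * (c / (N * (N + 1))) ^ m / (m.factorial : ℝ)

open Filter Finset Real

noncomputable def Tm (N : ℝ) (n l : ℕ) (lam : ℝ) (j : ℕ) : ℝ :=
  lam ^ (n + l - 2 * j) * (1 - lam) ^ j * N ^ (l - j) * (N + 1) ^ (n - j) *
    (n.choose j : ℝ) * (l.choose j : ℝ)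

lemma Pl_eq_s5 (N lam : ℝ) (n l : ℕ) :
    Pl N n l lam = ((1 + N * lam) ^ (l + n + 1))⁻¹ *
      ∑ j ∈ Finset.range (l + 1), Tm N n l lam j := by
  unfold Pl
  congr 1
  have h1 : ∑ m ∈ Finset.Icc (n - l) n,
      lam ^ (2 * m + l - n) * (1 - lam) ^ (n - m) * N ^ (l + m - n) * (N + 1) ^ m *
        (n.choose m : ℝ) * (l.choose (n - m) : ℝ)
      = ∑ j ∈ Finset.range (min l n + 1), Tm N n l lam j := by
    refine Finset.sum_nbij' (fun m => n - m) (fun j => n - j) ?_ ?_ ?_ ?_ ?_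
    · intro m hm
      simp only [Finset.mem_Icc] at hm
      simp only [Finset.mem_range]
      omega
    · intro j hj
      simp only [Finset.mem_range] at hj
      simp only [Finset.mem_Icc]
      omega
    · intro m hm
      simp only [Finset.mem_Icc] at hm
      show n - (n - m) = m
      omega
    · intro j hj
      simp only [Finset.mem_range] at hj
      show n - (n - j) = j
      omega
    · intro m hm
      simp only [Finset.mem_Icc] at hm
      unfold Tm
      rw [show n + l - 2 * (n - m) = 2 * m + l - n by omega,
        show l - (n - m) = l + m - n by omega,
        show n - (n - m) = m by omega,
        Nat.choose_symm hm.2]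
  rw [h1]
  refine Finset.sum_subset ?_ ?_
  · intro j hj
    simp only [Finset.mem_range] at *
    omega
  · intro j hj hj'
    simp only [Finset.mem_range] at *
    have : n < j := by omega
    unfold Tm
    rw [Nat.choose_eq_zero_of_lt this]
    simp

lemma tendsto_one_sub_div_pow (t : ℝ) :
    Filter.Tendsto (fun n : ℕ => (1 - t / n) ^ n) atTop (nhds (Real.exp (-t))) := by
  have := Real.tendsto_one_add_div_pow_exp (-t)
  simpa [sub_eq_add_neg, neg_div] using this

lemma tendsto_one_sub_div (t : ℝ) :
    Filter.Tendsto (fun n : ℕ => 1 - t / n) atTop (nhds 1) := by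
  have h : Filter.Tendsto (fun n : ℕ => t / (n : ℝ)) atTop (nhds 0) :=
    tendsto_const_div_atTop_nhds_zero_nat t
  simpa using (tendsto_const_nhds (x := (1:ℝ))).sub h

lemma cast_choose_eq_prod {n j : ℕ} (h : j ≤ n) :
    (n.choose j : ℝ) = (∏ i ∈ Finset.range j, ((n : ℝ) - i)) / (j.factorial : ℝ) := by
  rw [eq_div_iff (by exact_mod_cast j.factorial_ne_zero)]
  have := Nat.descFactorial_eq_factorial_mul_choose n j
  have h2 : ((n.descFactorial j : ℕ) : ℝ) = ∏ i ∈ Finset.range j, ((n : ℝ) - i) := by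
    rw [Nat.descFactorial_eq_prod_range]
    push_cast
    refine Finset.prod_congr rfl fun i hi => ?_
    simp only [Finset.mem_range] at hi
    rw [Nat.cast_sub (by omega)]
  rw [← h2, this]
  push_cast
  ring

lemma tendsto_choose_mul (c : ℝ) (j : ℕ) :
    Filter.Tendsto (fun n : ℕ => (c / n) ^ j * (n.choose j : ℝ)) atTop
      (nhds (c ^ j / (j.factorial : ℝ))) := by
  have hprod : Filter.Tendsto (fun n : ℕ => ∏ i ∈ Finset.range j, (1 - (i : ℝ) / n)) atTop
      (nhds 1) := by
    have := tendsto_finset_prod (Finset.range j)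
      (fun i _ => tendsto_one_sub_div (i : ℝ))
    simpa using this
  have hmain : Filter.Tendsto (fun n : ℕ => c ^ j / (j.factorial : ℝ) *
      ∏ i ∈ Finset.range j, (1 - (i : ℝ) / n)) atTop (nhds (c ^ j / (j.factorial : ℝ))) := by
    simpa using (tendsto_const_nhds (x := c ^ j / (j.factorial : ℝ))).mul hprod
  refine hmain.congr' ?_
  filter_upwards [eventually_ge_atTop (max j 1)] with n hn
  have hj : j ≤ n := le_trans (le_max_left _ _) hn
  have hn1 : 1 ≤ n := le_trans (le_max_right _ _) hn
  have hn0 : (n : ℝ) ≠ 0 := by positivity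
  rw [cast_choose_eq_prod hj, div_pow]
  rw [show (∏ i ∈ Finset.range j, (1 - (i : ℝ) / n)) =
      (∏ i ∈ Finset.range j, ((n : ℝ) - i)) / (n : ℝ) ^ j by
    rw [eq_div_iff (by positivity)]
    rw [show ((n:ℝ)^j) = ∏ _i ∈ Finset.range j, (n:ℝ) by
      rw [Finset.prod_const, Finset.card_range]]
    rw [← Finset.prod_mul_distrib]
    refine Finset.prod_congr rfl fun i _ => ?_
    field_simp]
  ring

set_option maxHeartbeats 1000000 in
lemma tendsto_term (N c : ℝ) (hN : 0 < N) (hc : 0 < c) (l j : ℕ) (hj : j ≤ l) :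
    Filter.Tendsto
      (fun n : ℕ => ((1 + N * (1 - c / n)) ^ (l + n + 1))⁻¹ * Tm N n l (1 - c / n) j)
      atTop
      (nhds (N ^ l / (N + 1) ^ (l + 1) * Real.exp (-c / (N + 1)) *
        ((l.choose j : ℝ) * (c / (N * (N + 1))) ^ j / (j.factorial : ℝ)))) := by
  set x : ℝ := N * c / (N + 1) with hxdef
  have hN1 : (0:ℝ) < N + 1 := by linarith
  have hx : 0 < x := by positivity
  have hN10 : (N + 1) ≠ 0 := by positivity
  have hN0 : N ≠ 0 := ne_of_gt hN
  -- the explicit product form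
  have hF : Filter.Tendsto
      (fun n : ℕ => ((c / n) ^ j * (n.choose j : ℝ)) *
        ((1 - c / n) ^ n * ((1 - c / n) ^ j)⁻¹ * (1 - c / n) ^ (l - j)) *
        (((1 - x / n) ^ n)⁻¹ * ((1 - x / n) ^ (l + 1))⁻¹) *
        (N ^ (l - j) * ((N + 1) ^ (l + j + 1))⁻¹ * (l.choose j : ℝ)))
      atTop
      (nhds ((c ^ j / (j.factorial : ℝ)) *
        (Real.exp (-c) * (1 : ℝ)⁻¹ * 1) * ((Real.exp (-x))⁻¹ * (1 : ℝ)⁻¹) *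
        (N ^ (l - j) * ((N + 1) ^ (l + j + 1))⁻¹ * (l.choose j : ℝ)))) := by
    refine Filter.Tendsto.mul (Filter.Tendsto.mul (Filter.Tendsto.mul ?_ ?_) ?_)
      tendsto_const_nhds
    · exact tendsto_choose_mul c j
    · refine Filter.Tendsto.mul (Filter.Tendsto.mul (tendsto_one_sub_div_pow c) ?_) ?_
      · have : Filter.Tendsto (fun n : ℕ => (1 - c / n) ^ j) atTop (nhds 1) := by
          simpa using (tendsto_one_sub_div c).pow j
        exact this.inv₀ one_ne_zero
      · simpa using (tendsto_one_sub_div c).pow (l - j)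
    · refine Filter.Tendsto.mul ?_ ?_
      · exact (tendsto_one_sub_div_pow x).inv₀ (Real.exp_ne_zero _)
      · have : Filter.Tendsto (fun n : ℕ => (1 - x / n) ^ (l + 1)) atTop (nhds 1) := by
          simpa using (tendsto_one_sub_div x).pow (l + 1)
        exact this.inv₀ one_ne_zero
  have hlim : (c ^ j / (j.factorial : ℝ)) *
        (Real.exp (-c) * (1 : ℝ)⁻¹ * 1) * ((Real.exp (-x))⁻¹ * (1 : ℝ)⁻¹) *
        (N ^ (l - j) * ((N + 1) ^ (l + j + 1))⁻¹ * (l.choose j : ℝ))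
      = N ^ l / (N + 1) ^ (l + 1) * Real.exp (-c / (N + 1)) *
        ((l.choose j : ℝ) * (c / (N * (N + 1))) ^ j / (j.factorial : ℝ)) := by
    obtain ⟨d, rfl⟩ : ∃ d, l = j + d := ⟨l - j, by omega⟩
    rw [show j + d - j = d by omega,
      show (Real.exp (-x))⁻¹ = Real.exp x by rw [← Real.exp_neg, neg_neg],
      show Real.exp (-c / (N + 1)) = Real.exp (-c) * Real.exp x by
        rw [← Real.exp_add]
        congr 1
        rw [hxdef]
        field_simp
        ring, div_pow, mul_pow]
    have hfact : (j.factorial : ℝ) ≠ 0 := by exact_mod_cast j.factorial_ne_zero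
    have hec := Real.exp_ne_zero (-c)
    have hex := Real.exp_ne_zero x
    generalize Real.exp (-c) = E1 at *
    generalize Real.exp x = E2 at *
    field_simp
    ring
  rw [hlim] at hF
  refine hF.congr' ?_
  filter_upwards [eventually_ge_atTop (max l 1),
    (tendsto_one_sub_div c).eventually_const_lt (show (0:ℝ) < 1 by norm_num),
    (tendsto_one_sub_div x).eventually_const_lt (show (0:ℝ) < 1 by norm_num)]
    with n hn hlam hQ
  have hln : l ≤ n := le_trans (le_max_left _ _) hn
  have hn1 : 1 ≤ n := le_trans (le_max_right _ _) hn
  have hjn : j ≤ n := le_trans hj hln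
  set lam : ℝ := 1 - c / n with hlamdef
  set Q : ℝ := 1 - x / n with hQdef
  set t : ℝ := c / n with htdef
  have hnR : (n : ℝ) ≠ 0 := by positivity
  have key : 1 + N * lam = (N + 1) * Q := by
    rw [hlamdef, hQdef, hxdef, htdef]
    field_simp
    ring
  have h1lam : 1 - lam = t := by rw [hlamdef, htdef]; ring
  unfold Tm
  rw [key, h1lam, mul_pow]
  obtain ⟨d, rfl⟩ : ∃ d, l = j + d := ⟨l - j, by omega⟩
  obtain ⟨a, hna⟩ : ∃ a, n = j + a := ⟨n - j, by omega⟩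
  rw [show n + (j + d) - 2 * j = a + d by omega,
    show n - j = a by omega, show j + d - j = d by omega, hna]
  have hlam0 : lam ≠ 0 := ne_of_gt hlam
  have hQ0 : Q ≠ 0 := ne_of_gt hQ
  clear hlamdef hQdef htdef key h1lam hlam hQ hn hna hnR hx
  clear_value lam Q t x
  field_simp
  ring

lemma tendsto_Pl (N c : ℝ) (hN : 0 < N) (hc : 0 < c) (l : ℕ) :
    Filter.Tendsto (fun n : ℕ => Pl N n l (1 - c / n)) atTop (nhds (pdist N c l)) := by
  have hsum : Filter.Tendsto
      (fun n : ℕ => ∑ j ∈ Finset.range (l + 1),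
        ((1 + N * (1 - c / n)) ^ (l + n + 1))⁻¹ * Tm N n l (1 - c / n) j)
      atTop
      (nhds (∑ j ∈ Finset.range (l + 1), N ^ l / (N + 1) ^ (l + 1) *
        Real.exp (-c / (N + 1)) *
        ((l.choose j : ℝ) * (c / (N * (N + 1))) ^ j / (j.factorial : ℝ)))) := by
    refine tendsto_finset_sum _ fun j hj => ?_
    exact tendsto_term N c hN hc l j (by simpa using Nat.lt_succ_iff.mp (Finset.mem_range.mp hj))
  have heq : (∑ j ∈ Finset.range (l + 1), N ^ l / (N + 1) ^ (l + 1) *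
        Real.exp (-c / (N + 1)) *
        ((l.choose j : ℝ) * (c / (N * (N + 1))) ^ j / (j.factorial : ℝ))) = pdist N c l := by
    rw [pdist, ← Finset.mul_sum]
  rw [heq] at hsum
  refine hsum.congr fun n => ?_
  rw [Pl_eq_s5, Finset.mul_sum]

lemma choose_mul_pow_le {u : ℝ} (hu : 0 ≤ u) {m l : ℕ} (hm : m ≤ l) :
    (l.choose m : ℝ) * u ^ m ≤ (1 + u) ^ l := by
  have h := add_pow u 1 l
  simp only [one_pow, mul_one] at h
  rw [show (1:ℝ) + u = u + 1 by ring, h]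
  calc (l.choose m : ℝ) * u ^ m = u ^ m * (l.choose m : ℝ) := by ring
    _ ≤ ∑ k ∈ Finset.range (l + 1), u ^ k * (l.choose k : ℝ) :=
      Finset.single_le_sum (f := fun k => u ^ k * (l.choose k : ℝ))
        (fun k _ => by positivity) (by simpa using Nat.lt_succ_of_le hm)

/-- The master sum bound. -/

lemma sum_bound (N : ℝ) (hN : 0 < N) (l : ℕ) {s : ℝ} (hs : 0 ≤ s) :
    ∑ m ∈ Finset.range (l + 1),
        (l.choose m : ℝ) * (N / (N + 1)) ^ (l - m) * s ^ m / (m.factorial : ℝ)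
      ≤ ((2 * N + 1) / (2 * (N + 1))) ^ l * Real.exp (2 * (N + 1) * s) := by
  have hN1 : (0:ℝ) < N + 1 := by linarith
  have hterm : ∀ m ∈ Finset.range (l + 1),
      (l.choose m : ℝ) * (N / (N + 1)) ^ (l - m) * s ^ m / (m.factorial : ℝ)
        ≤ ((2 * N + 1) / (2 * (N + 1))) ^ l * ((2 * (N + 1) * s) ^ m / (m.factorial : ℝ)) := by
    intro m hm
    have hml : m ≤ l := Nat.lt_succ_iff.mp (Finset.mem_range.mp hm)
    obtain ⟨e, rfl⟩ : ∃ e, l = m + e := ⟨l - m, by omega⟩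
    rw [show m + e - m = e by omega]
    have hu : (0:ℝ) ≤ 1 / (2 * N) := by positivity
    have hch : (( (m+e).choose m : ℝ)) * (1 / (2 * N)) ^ m ≤ (1 + 1 / (2 * N)) ^ (m + e) :=
      choose_mul_pow_le hu (by omega)
    have hfac : (0:ℝ) < (m.factorial : ℝ) := by exact_mod_cast m.factorial_pos
    -- reduce to the choose bound
    have key : ((m+e).choose m : ℝ) * (N / (N + 1)) ^ e * s ^ m / (m.factorial : ℝ)
        = (((m+e).choose m : ℝ) * (1 / (2 * N)) ^ m) *
          ((N / (N + 1)) ^ (m + e) * (2 * (N + 1) * s) ^ m / (m.factorial : ℝ)) := by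
      have hN0 : N ≠ 0 := ne_of_gt hN
      have hN10 : N + 1 ≠ 0 := ne_of_gt hN1
      rw [pow_add, show (2 * (N + 1) * s) ^ m = 2 ^ m * (N + 1) ^ m * s ^ m by
        rw [mul_pow, mul_pow]]
      simp only [div_pow, one_pow, mul_pow]
      field_simp
    rw [key]
    have h2 : (((m+e).choose m : ℝ) * (1 / (2 * N)) ^ m) *
          ((N / (N + 1)) ^ (m + e) * (2 * (N + 1) * s) ^ m / (m.factorial : ℝ))
        ≤ ((1 + 1 / (2 * N)) ^ (m + e)) *
          ((N / (N + 1)) ^ (m + e) * (2 * (N + 1) * s) ^ m / (m.factorial : ℝ)) := by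
      refine mul_le_mul_of_nonneg_right hch (by positivity)
    refine h2.trans (le_of_eq ?_)
    rw [mul_div_assoc, ← mul_assoc, ← mul_pow]
    have : (1 + 1 / (2 * N)) * (N / (N + 1)) = (2 * N + 1) / (2 * (N + 1)) := by
      field_simp
    rw [this]
  calc ∑ m ∈ Finset.range (l + 1),
        (l.choose m : ℝ) * (N / (N + 1)) ^ (l - m) * s ^ m / (m.factorial : ℝ)
      ≤ ∑ m ∈ Finset.range (l + 1),
        ((2 * N + 1) / (2 * (N + 1))) ^ l * ((2 * (N + 1) * s) ^ m / (m.factorial : ℝ)) :=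
        Finset.sum_le_sum hterm
    _ = ((2 * N + 1) / (2 * (N + 1))) ^ l *
        ∑ m ∈ Finset.range (l + 1), (2 * (N + 1) * s) ^ m / (m.factorial : ℝ) := by
        rw [Finset.mul_sum]
    _ ≤ ((2 * N + 1) / (2 * (N + 1))) ^ l * Real.exp (2 * (N + 1) * s) := by
        refine mul_le_mul_of_nonneg_left ?_ (by positivity)
        exact Real.sum_le_exp_of_nonneg (by positivity) _

lemma pdist_le (N c : ℝ) (hN : 0 < N) (hc : 0 < c) (l : ℕ) :
    pdist N c l ≤ ((2 * N + 1) / (2 * (N + 1))) ^ l * Real.exp (2 * c / (N + 1)) := by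
  have hN1 : (0:ℝ) < N + 1 := by linarith
  have h1 : pdist N c l = Real.exp (-c / (N + 1)) / (N + 1) *
      ∑ m ∈ Finset.range (l + 1),
        (l.choose m : ℝ) * (N / (N + 1)) ^ (l - m) * (c / (N + 1) ^ 2) ^ m / (m.factorial : ℝ) := by
    rw [pdist, Finset.mul_sum, Finset.mul_sum]
    refine Finset.sum_congr rfl fun m hm => ?_
    have hml : m ≤ l := Nat.lt_succ_iff.mp (Finset.mem_range.mp hm)
    obtain ⟨e, rfl⟩ : ∃ e, l = m + e := ⟨l - m, by omega⟩
    rw [show m + e - m = e by omega,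
      show (c / (N * (N + 1))) ^ m = c ^ m / (N ^ m * (N + 1) ^ m) by rw [div_pow, mul_pow],
      show (c / (N + 1) ^ 2) ^ m = c ^ m / (N + 1) ^ (2 * m) by rw [div_pow, ← pow_mul],
      show (N / (N + 1)) ^ e = N ^ e / (N + 1) ^ e by rw [div_pow], pow_add]
    have hN0 : N ≠ 0 := ne_of_gt hN
    have hN10 : N + 1 ≠ 0 := ne_of_gt hN1
    field_simp
    ring
  rw [h1]
  have h2 : ∑ m ∈ Finset.range (l + 1),
      (l.choose m : ℝ) * (N / (N + 1)) ^ (l - m) * (c / (N + 1) ^ 2) ^ m / (m.factorial : ℝ)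
      ≤ ((2 * N + 1) / (2 * (N + 1))) ^ l * Real.exp (2 * (N + 1) * (c / (N + 1) ^ 2)) :=
    sum_bound N hN l (by positivity)
  have h3 : Real.exp (-c / (N + 1)) / (N + 1) ≤ 1 := by
    rw [div_le_one hN1]
    calc Real.exp (-c / (N + 1)) ≤ 1 := Real.exp_le_one_iff.mpr (by
          rw [neg_div]; simp only [neg_nonpos]; positivity)
    _ ≤ N + 1 := by linarith
  have h4 : 2 * (N + 1) * (c / (N + 1) ^ 2) = 2 * c / (N + 1) := by
    field_simp
  rw [h4] at h2
  calc Real.exp (-c / (N + 1)) / (N + 1) * ∑ m ∈ Finset.range (l + 1),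
        (l.choose m : ℝ) * (N / (N + 1)) ^ (l - m) * (c / (N + 1) ^ 2) ^ m / (m.factorial : ℝ)
      ≤ 1 * (((2 * N + 1) / (2 * (N + 1))) ^ l * Real.exp (2 * c / (N + 1))) := by
        refine mul_le_mul h3 h2 ?_ (by norm_num)
        refine Finset.sum_nonneg fun m _ => by positivity
    _ = ((2 * N + 1) / (2 * (N + 1))) ^ l * Real.exp (2 * c / (N + 1)) := one_mul _

lemma term_le (N c : ℝ) (hN : 0 < N) (hc : 0 < c) {n : ℕ} (hn1 : 1 ≤ n) (hcn : c / n < 1)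
    (l j : ℕ) (hj : j ≤ l) :
    ((1 + N * (1 - c / n)) ^ (l + n + 1))⁻¹ * Tm N n l (1 - c / n) j
      ≤ ((N + 1) ^ n * ((1 + N * (1 - c / n)) ^ (n + 1))⁻¹) *
        ((l.choose j : ℝ) * (N / (N + 1)) ^ (l - j) * c ^ j / (j.factorial : ℝ)) := by
  have hN1 : (0:ℝ) < N + 1 := by linarith
  have hnR : (0:ℝ) < (n : ℝ) := by exact_mod_cast hn1
  set lam : ℝ := 1 - c / n with hlamdef
  have hl0 : 0 < lam := by simp only [hlamdef]; linarith
  have hl1 : lam ≤ 1 := by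
    have : 0 < c / n := by positivity
    simp only [hlamdef]; linarith
  set P : ℝ := 1 + N * lam with hPdef
  have hP1 : (1:ℝ) ≤ P := by nlinarith
  have hP0 : (0:ℝ) < P := by linarith
  by_cases hjn : j ≤ n
  · obtain ⟨d, rfl⟩ : ∃ d, l = j + d := ⟨l - j, by omega⟩
    obtain ⟨a, rfl⟩ : ∃ a, n = j + a := ⟨n - j, by omega⟩
    unfold Tm
    rw [show (j + a) + (j + d) - 2 * j = a + d by omega,
      show j + a - j = a by omega, show j + d - j = d by omega,
      show (1 : ℝ) - lam = c / ((j+a : ℕ) : ℝ) by rw [hlamdef]; ring]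
    set t : ℝ := c / ((j + a : ℕ) : ℝ) with htdef
    have ht0 : 0 < t := by positivity
    have hid : (P ^ ((j + d) + (j + a) + 1))⁻¹ *
        (lam ^ (a + d) * t ^ j * N ^ d * (N + 1) ^ a *
          (((j + a).choose j : ℝ)) * (((j + d).choose j : ℝ)))
        = ((N + 1) ^ (j + a) * (P ^ ((j + a) + 1))⁻¹) * (lam * N / P) ^ d * lam ^ a *
          (t ^ j * (((j + a).choose j : ℝ))) * (((N + 1) * P) ^ j)⁻¹ *
          (((j + d).choose j : ℝ)) := by
      have hP0' : P ≠ 0 := ne_of_gt hP0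
      have hN10 : N + 1 ≠ 0 := ne_of_gt hN1
      rw [show (lam * N / P) ^ d = lam ^ d * N ^ d / P ^ d by rw [div_pow, mul_pow],
        show ((N + 1) * P) ^ j = (N + 1) ^ j * P ^ j by rw [mul_pow]]
      field_simp
      ring
    rw [hid]
    have hratio : lam * N / P ≤ N / (N + 1) := by
      rw [div_le_div_iff₀ hP0 hN1]
      nlinarith
    have hchoose : (((j + a).choose j : ℝ)) ≤ (((j + a : ℕ) : ℝ)) ^ j / (j.factorial : ℝ) :=
      Nat.choose_le_pow_div j (j + a)
    have h3 : t ^ j * (((j + a).choose j : ℝ)) ≤ c ^ j / (j.factorial : ℝ) := by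
      calc t ^ j * (((j + a).choose j : ℝ))
          ≤ t ^ j * ((((j + a : ℕ) : ℝ)) ^ j / (j.factorial : ℝ)) := by
            refine mul_le_mul_of_nonneg_left hchoose (by positivity)
        _ = c ^ j / (j.factorial : ℝ) := by
            rw [htdef, div_pow]
            have hXf : (((j + a : ℕ) : ℝ)) ^ j ≠ 0 := by positivity
            field_simp
    have h4 : (((N + 1) * P) ^ j)⁻¹ ≤ 1 := by
      refine inv_le_one_of_one_le₀ ?_
      refine one_le_pow₀ ?_
      nlinarith
    have h2 : lam ^ a ≤ 1 := pow_le_one₀ (le_of_lt hl0) hl1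
    calc ((N + 1) ^ (j + a) * (P ^ ((j + a) + 1))⁻¹) * (lam * N / P) ^ d * lam ^ a *
          (t ^ j * (((j + a).choose j : ℝ))) * (((N + 1) * P) ^ j)⁻¹ *
          (((j + d).choose j : ℝ))
        ≤ ((N + 1) ^ (j + a) * (P ^ ((j + a) + 1))⁻¹) * (N / (N + 1)) ^ d * 1 *
          (c ^ j / (j.factorial : ℝ)) * 1 * (((j + d).choose j : ℝ)) := by
          gcongr <;> positivity
      _ = ((N + 1) ^ (j + a) * (P ^ ((j + a) + 1))⁻¹) *
          (((j + d).choose j : ℝ) * (N / (N + 1)) ^ d * c ^ j / (j.factorial : ℝ)) := by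
          ring
  · unfold Tm
    rw [Nat.choose_eq_zero_of_lt (by omega : n < j)]
    push_cast
    rw [mul_zero, zero_mul, mul_zero]
    positivity

lemma Pl_nonneg (N : ℝ) (hN : 0 < N) {lam : ℝ} (h0 : 0 ≤ lam) (h1 : lam ≤ 1) (n l : ℕ) :
    0 ≤ Pl N n l lam := by
  unfold Pl
  have hP : (0:ℝ) ≤ 1 + N * lam := by nlinarith
  refine mul_nonneg (by positivity) (Finset.sum_nonneg fun m _ => ?_)
  have h1l : (0:ℝ) ≤ 1 - lam := by linarith
  positivity

lemma Pl_le_aux (N c : ℝ) (hN : 0 < N) (hc : 0 < c) {n : ℕ} (hn1 : 1 ≤ n) (hcn : c / n < 1)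
    (l : ℕ) :
    Pl N n l (1 - c / n) ≤ ((N + 1) ^ n * ((1 + N * (1 - c / n)) ^ (n + 1))⁻¹) *
      (((2 * N + 1) / (2 * (N + 1))) ^ l * Real.exp (2 * (N + 1) * c)) := by
  have hN1 : (0:ℝ) < N + 1 := by linarith
  have hl0 : (0:ℝ) < 1 - c / n := by linarith
  have hP0 : (0:ℝ) < 1 + N * (1 - c / n) := by nlinarith
  have hA : (0:ℝ) ≤ (N + 1) ^ n * ((1 + N * (1 - c / n)) ^ (n + 1))⁻¹ := by positivity
  rw [Pl_eq_s5, Finset.mul_sum]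
  calc ∑ j ∈ Finset.range (l + 1),
        ((1 + N * (1 - c / n)) ^ (l + n + 1))⁻¹ * Tm N n l (1 - c / n) j
      ≤ ∑ j ∈ Finset.range (l + 1),
        ((N + 1) ^ n * ((1 + N * (1 - c / n)) ^ (n + 1))⁻¹) *
          ((l.choose j : ℝ) * (N / (N + 1)) ^ (l - j) * c ^ j / (j.factorial : ℝ)) := by
        refine Finset.sum_le_sum fun j hj => ?_
        exact term_le N c hN hc hn1 hcn l j (Nat.lt_succ_iff.mp (Finset.mem_range.mp hj))
    _ = ((N + 1) ^ n * ((1 + N * (1 - c / n)) ^ (n + 1))⁻¹) *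
        ∑ j ∈ Finset.range (l + 1),
          (l.choose j : ℝ) * (N / (N + 1)) ^ (l - j) * c ^ j / (j.factorial : ℝ) := by
        rw [Finset.mul_sum]
    _ ≤ ((N + 1) ^ n * ((1 + N * (1 - c / n)) ^ (n + 1))⁻¹) *
        (((2 * N + 1) / (2 * (N + 1))) ^ l * Real.exp (2 * (N + 1) * c)) := by
        exact mul_le_mul_of_nonneg_left (sum_bound N hN l (le_of_lt hc)) hA

lemma pdist_nonneg (N c : ℝ) (hN : 0 < N) (hc : 0 < c) (l : ℕ) : 0 ≤ pdist N c l := by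
  unfold pdist
  have h1 : (0:ℝ) ≤ c / (N * (N + 1)) := by positivity
  refine mul_nonneg (mul_nonneg (by positivity) (Real.exp_pos _).le)
    (Finset.sum_nonneg fun m _ => by positivity)

lemma tendsto_A (N c : ℝ) (hN : 0 < N) (hc : 0 < c) :
    Filter.Tendsto (fun n : ℕ => (N + 1) ^ n * ((1 + N * (1 - c / n)) ^ (n + 1))⁻¹) atTop
      (nhds (Real.exp (N * c / (N + 1)) / (N + 1))) := by
  set x : ℝ := N * c / (N + 1) with hxdef
  have hN1 : (0:ℝ) < N + 1 := by linarith
  have hF : Filter.Tendsto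
      (fun n : ℕ => ((1 - x / n) ^ n)⁻¹ * ((N + 1) * (1 - x / n))⁻¹) atTop
      (nhds ((Real.exp (-x))⁻¹ * ((N + 1) * 1)⁻¹)) := by
    refine Filter.Tendsto.mul ?_ ?_
    · exact (tendsto_one_sub_div_pow x).inv₀ (Real.exp_ne_zero _)
    · exact (Filter.Tendsto.mul tendsto_const_nhds (tendsto_one_sub_div x)).inv₀ (by
        simp; positivity)
  have hval : (Real.exp (-x))⁻¹ * ((N + 1) * 1)⁻¹ = Real.exp x / (N + 1) := by
    rw [← Real.exp_neg, neg_neg, mul_one]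
    ring
  rw [hval] at hF
  refine hF.congr' ?_
  filter_upwards [eventually_ge_atTop 1,
    (tendsto_one_sub_div x).eventually_const_lt (show (0:ℝ) < 1 by norm_num)]
    with n hn1 hQ
  have hnR : (0:ℝ) < (n : ℝ) := by exact_mod_cast hn1
  have key : 1 + N * (1 - c / n) = (N + 1) * (1 - x / n) := by
    rw [hxdef]
    field_simp
    ring
  rw [key, mul_pow]
  set Q : ℝ := 1 - x / n with hQdef
  have hQ0 : Q ≠ 0 := ne_of_gt hQ
  have hN10 : (N + 1 : ℝ) ≠ 0 := ne_of_gt hN1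
  clear_value Q
  field_simp
  ring

/-- Trace-norm (ℓ¹) convergence of the eigenvalue distributions `l ↦ P_l(N,n,1−c/n)`
of the states `Φ_{1−c/n,|n⟩⟨n|}(τ_N)` to the limiting distribution `p(N,c)`. -/
theorem tendsto_trace_norm_pdist (N c : ℝ) (hN : 0 < N) (hc : 0 < c) :
    Filter.Tendsto
      (fun n : ℕ => ∑' l : ℕ, |Pl N n l (1 - c / n) - pdist N c l|)
      Filter.atTop (nhds 0) := by
  have hN1 : (0:ℝ) < N + 1 := by linarith
  set q : ℝ := (2 * N + 1) / (2 * (N + 1)) with hqdef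
  have hq0 : 0 ≤ q := by positivity
  have hq1 : q < 1 := by
    rw [hqdef, div_lt_one (by positivity)]
    linarith
  set K : ℝ := Real.exp (N * c / (N + 1)) * Real.exp (2 * (N + 1) * c) +
    Real.exp (2 * c / (N + 1)) with hKdef
  have hsum : Summable (fun l : ℕ => K * q ^ l) :=
    (summable_geometric_of_lt_one hq0 hq1).mul_left K
  have hab : ∀ l : ℕ, Filter.Tendsto
      (fun n : ℕ => |Pl N n l (1 - c / n) - pdist N c l|) atTop (nhds 0) := by
    intro l
    have := ((tendsto_Pl N c hN hc l).sub
      (tendsto_const_nhds (x := pdist N c l))).abs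
    simpa using this
  have hbound : ∀ᶠ n : ℕ in atTop, ∀ l : ℕ,
      ‖|Pl N n l (1 - c / n) - pdist N c l|‖ ≤ K * q ^ l := by
    have hAev : ∀ᶠ n : ℕ in atTop,
        (N + 1) ^ n * ((1 + N * (1 - c / n)) ^ (n + 1))⁻¹ ≤ Real.exp (N * c / (N + 1)) := by
      refine (tendsto_A N c hN hc).eventually_le_const ?_
      exact div_lt_self (Real.exp_pos _) (by linarith)
    filter_upwards [eventually_ge_atTop 1,
      (tendsto_const_div_atTop_nhds_zero_nat c).eventually_lt_const (show (0:ℝ) < 1 by norm_num),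
      hAev] with n hn1 hcn hAn l
    have hnR : (0:ℝ) < (n : ℝ) := by exact_mod_cast hn1
    have hl0 : 0 ≤ 1 - c / n := by linarith
    have hl1 : 1 - c / n ≤ 1 := by
      have : 0 < c / n := by positivity
      linarith
    have hPl0 : 0 ≤ Pl N n l (1 - c / n) := Pl_nonneg N hN hl0 hl1 n l
    have hpd0 : 0 ≤ pdist N c l := pdist_nonneg N c hN hc l
    rw [Real.norm_eq_abs, abs_abs]
    calc |Pl N n l (1 - c / n) - pdist N c l|
        ≤ |Pl N n l (1 - c / n)| + |pdist N c l| := abs_sub _ _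
      _ = Pl N n l (1 - c / n) + pdist N c l := by
          rw [abs_of_nonneg hPl0, abs_of_nonneg hpd0]
      _ ≤ (Real.exp (N * c / (N + 1)) * (q ^ l * Real.exp (2 * (N + 1) * c))) +
          q ^ l * Real.exp (2 * c / (N + 1)) := by
          refine add_le_add ?_ (pdist_le N c hN hc l)
          calc Pl N n l (1 - c / n)
              ≤ ((N + 1) ^ n * ((1 + N * (1 - c / n)) ^ (n + 1))⁻¹) *
                (q ^ l * Real.exp (2 * (N + 1) * c)) := Pl_le_aux N c hN hc hn1 hcn l
            _ ≤ Real.exp (N * c / (N + 1)) * (q ^ l * Real.exp (2 * (N + 1) * c)) := by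
                refine mul_le_mul_of_nonneg_right hAn (by positivity)
      _ = K * q ^ l := by rw [hKdef]; ring
  have h := tendsto_tsum_of_dominated_convergence (f := fun (n : ℕ) (l : ℕ) =>
    |Pl N n l (1 - c / n) - pdist N c l|) (g := fun _ : ℕ => (0:ℝ))
    (bound := fun l : ℕ => K * q ^ l) hsum hab hbound
  simpa using h
end

section
/- For every real N > 0, every λ ∈ (0,1) and every integer n ≥ 0, the family {P_l(N,n,λ)}_{l∈ℕ} is summable and Σ_{l=0}^∞ P_l(N,n,λ) = 1. (The P_l(N,n,λ) are the eigenvalues of the Fock-diagonal state Φ_{λ,|n⟩⟨n|}(τ_N), so they form a probability distribution.) -/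
/-- For every `N > 0`, `λ ∈ (0,1)` and `n ∈ ℕ`, the family `{P_l(N,n,λ)}_{l∈ℕ}` is
summable with total sum `1`, i.e. it is a probability distribution on `ℕ`. -/
theorem Pl_prob_dist (N lam : ℝ) (hN : 0 < N) (hlam : lam ∈ Set.Ioo (0 : ℝ) 1) (n : ℕ) :
    HasSum (fun l : ℕ => Pl N n l lam) 1 := by
  obtain ⟨hl0, hl1⟩ := hlam
  have hD0 : (0:ℝ) < 1 + N * lam := by nlinarith
  have hDne : (1 + N * lam) ≠ 0 := ne_of_gt hD0
  set x : ℝ := N * lam / (1 + N * lam) with hx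
  have hx0 : 0 < x := div_pos (by positivity) hD0
  have hx1 : x < 1 := (div_lt_one hD0).2 (by linarith)
  have hxnorm : ‖x‖ < 1 := by rw [Real.norm_eq_abs, abs_of_pos hx0]; exact hx1
  -- per-m summation
  set g : ℕ → ℕ → ℝ := fun m l =>
    ((1 + N * lam) ^ (l + n + 1))⁻¹ *
      (lam ^ (2 * m + l - n) * (1 - lam) ^ (n - m) * N ^ (l + m - n) * (N + 1) ^ m *
        (n.choose m : ℝ) * (l.choose (n - m) : ℝ)) with hg
  have key : ∀ m ∈ Finset.range (n+1), HasSum (g m)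
      ((n.choose m : ℝ) * (lam * (N + 1)) ^ m * (1 - lam) ^ (n - m) *
        (((1 + N * lam) ^ n)⁻¹)) := by
    intro m hm
    rw [Finset.mem_range] at hm
    have hmn : m ≤ n := by omega
    set k := n - m with hk
    have H := (hasSum_choose_mul_geometric_of_norm_lt_one k hxnorm).mul_left
      ((n.choose m : ℝ) * lam ^ m * (1 - lam) ^ k * (N + 1) ^ m *
        (((1 + N * lam) ^ (k + n + 1))⁻¹))
    have hshift : (fun j : ℕ => g m (j + k)) = fun j =>
        ((n.choose m : ℝ) * lam ^ m * (1 - lam) ^ k * (N + 1) ^ m *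
          (((1 + N * lam) ^ (k + n + 1))⁻¹)) * (((j + k).choose k : ℝ) * x ^ j) := by
      funext j
      have e1 : 2 * m + (j + k) - n = m + j := by omega
      have e2 : (j + k) + m - n = j := by omega
      rw [hg]
      simp only [e1, e2, hk.symm]
      rw [hx, div_pow]
      field_simp
      ring
    have Hs : HasSum (fun j : ℕ => g m (j + k))
        (((n.choose m : ℝ) * lam ^ m * (1 - lam) ^ k * (N + 1) ^ m *
          (((1 + N * lam) ^ (k + n + 1))⁻¹)) * (1 / (1 - x) ^ (k + 1))) := by
      rw [hshift]; exact H
    have Hz : ∑ i ∈ Finset.range k, g m i = 0 := by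
      apply Finset.sum_eq_zero
      intro i hi
      rw [Finset.mem_range] at hi
      rw [hg]
      simp [Nat.choose_eq_zero_of_lt (by omega : i < n - m)]
    have := (hasSum_nat_add_iff (f := g m) k).1 Hs
    rw [Hz, add_zero] at this
    convert this using 1
    case e'_3 => rfl
    have h1mx : 1 - x = (1 + N * lam)⁻¹ := by
      rw [hx]; field_simp; ring
    rw [h1mx, mul_pow lam (N+1) m, inv_pow]
    field_simp
    ring
  have total := hasSum_sum key
  have hPl : (fun l => Pl N n l lam) = fun l => ∑ m ∈ Finset.range (n+1), g m l := by
    funext l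
    rw [Pl, Finset.mul_sum]
    apply Finset.sum_subset
    · intro m hm
      rw [Finset.mem_Icc] at hm
      rw [Finset.mem_range]
      omega
    · intro m hm hnot
      rw [Finset.mem_range] at hm
      rw [Finset.mem_Icc] at hnot
      have : l < n - m := by omega
      simp [Nat.choose_eq_zero_of_lt this]
  have hsum1 : ∑ m ∈ Finset.range (n+1),
      ((n.choose m : ℝ) * (lam * (N + 1)) ^ m * (1 - lam) ^ (n - m) *
        (((1 + N * lam) ^ n)⁻¹)) = 1 := by
    rw [← Finset.sum_mul]
    have hbin : ∑ m ∈ Finset.range (n+1),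
        ((n.choose m : ℝ) * (lam * (N + 1)) ^ m * (1 - lam) ^ (n - m)) =
        (lam * (N + 1) + (1 - lam)) ^ n := by
      rw [add_pow]
      apply Finset.sum_congr rfl
      intro m _
      ring
    rw [hbin]
    have : lam * (N + 1) + (1 - lam) = 1 + N * lam := by ring
    rw [this]
    field_simp
  rw [hPl]
  rw [← hsum1]
  exact total
end

section
/- For every real N > 0, every λ ∈ (0,1) and every integer n ≥ 0, the first moment of the distribution {P_l(N,n,λ)}_{l∈ℕ} satisfies Σ_{l=0}^∞ l · P_l(N,n,λ) = λN + (1−λ)n. (This is the mean photon number of the output state Φ_{λ,|n⟩⟨n|}(τ_N) of a beam splitter of transmissivity λ acting on the thermal state τ_N and the Fock state |n⟩.) -/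
open Finset

lemma aux_hasSum_weighted (k : ℕ) {r : ℝ} (hr : |r| < 1) :
    HasSum (fun j : ℕ => ((j : ℝ) + k) * ((j + k).choose k : ℝ) * r ^ j)
      ((k : ℝ) * (1 / (1 - r) ^ (k + 1)) + ((k : ℝ) + 1) * (r * (1 / (1 - r) ^ (k + 2)))) := by
  have hr' : ‖r‖ < 1 := by rwa [Real.norm_eq_abs]
  have base : HasSum (fun j : ℕ => ((j + k).choose k : ℝ) * r ^ j) (1 / (1 - r) ^ (k + 1)) :=
    hasSum_choose_mul_geometric_of_norm_lt_one k hr'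
  have base' : HasSum (fun j : ℕ => ((j + (k+1)).choose (k+1) : ℝ) * r ^ j)
      (1 / (1 - r) ^ (k + 2)) := hasSum_choose_mul_geometric_of_norm_lt_one (k+1) hr'
  have h1 := base.mul_left (k : ℝ)
  have h2 := base'.mul_left r
  -- shifted series for choose (j+k) (k+1)
  have h2' : HasSum (fun j : ℕ => ((j + k).choose (k+1) : ℝ) * r ^ j)
      (r * (1 / (1 - r) ^ (k + 2))) := by
    have hshift : HasSum (fun j : ℕ => (fun l : ℕ => ((l + k).choose (k+1) : ℝ) * r ^ l) (j + 1))
        (r * (1 / (1 - r) ^ (k + 2))) := by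
      refine h2.congr_fun ?_
      intro j
      show ((j + 1 + k).choose (k+1) : ℝ) * r ^ (j+1) = _
      have h : j + 1 + k = j + (k + 1) := by omega
      rw [h]
      ring
    have := (hasSum_nat_add_iff (f := fun l : ℕ => ((l + k).choose (k+1) : ℝ) * r ^ l) 1).mp hshift
    simpa [Nat.choose_eq_zero_of_lt (Nat.lt_succ_self k)] using this
  have h3 := h2'.mul_left ((k : ℝ) + 1)
  have := h1.add h3
  refine this.congr_fun ?_
  intro j
  have hnat : ((j + k).choose (k+1) * (k+1) : ℕ) = (j + k).choose k * j := by
    rw [Nat.choose_succ_right_eq]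
    congr 1
    omega
  have hc := congrArg (Nat.cast (R := ℝ)) hnat
  push_cast at hc
  linear_combination (-(r ^ j)) * hc


lemma aux_sum_choose (x y : ℝ) (n : ℕ) :
    ∑ i ∈ Finset.range (n+1), (i : ℝ) * (n.choose i : ℝ) * x ^ i * y ^ (n - i)
      = n * x * (x + y) ^ (n - 1) := by
  cases n with
  | zero => simp
  | succ p =>
    rw [Finset.sum_range_succ']
    have hterm : ∀ i ∈ Finset.range (p+1),
        ((i+1 : ℕ) : ℝ) * ((p+1).choose (i+1) : ℝ) * x ^ (i+1) * y ^ (p+1-(i+1))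
          = ((p:ℝ)+1) * x * ((p.choose i : ℝ) * x ^ i * y ^ (p - i)) := by
      intro i _
      have hnat : (p+1) * p.choose i = (p+1).choose (i+1) * (i+1) := Nat.add_one_mul_choose_eq p i
      have hc := congrArg (Nat.cast (R := ℝ)) hnat
      push_cast at hc
      have he : p + 1 - (i+1) = p - i := by omega
      rw [he]
      push_cast
      linear_combination (-(x ^ (i+1) * y ^ (p-i))) * hc
    rw [Finset.sum_congr rfl hterm, ← Finset.mul_sum]
    have hbin : ∑ i ∈ Finset.range (p+1), (p.choose i : ℝ) * x ^ i * y ^ (p - i)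
        = (x + y) ^ p := by
      rw [add_pow]
      exact Finset.sum_congr rfl fun i _ => by ring
    rw [hbin]
    push_cast
    simp

/-- The summand of `l * Pl` for fixed `m`. -/
noncomputable def Fterm (N lam : ℝ) (n m l : ℕ) : ℝ :=
  (l : ℝ) * (((1 + N * lam) ^ (l + n + 1))⁻¹ *
    (lam ^ (2 * m + l - n) * (1 - lam) ^ (n - m) * N ^ (l + m - n) * (N + 1) ^ m *
      (n.choose m : ℝ) * (l.choose (n - m) : ℝ)))

lemma lem_expand (N lam : ℝ) (n l : ℕ) :
    (l : ℝ) * Pl N n l lam = ∑ m ∈ Finset.range (n+1), Fterm N lam n m l := by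
  unfold Pl Fterm
  have hsub : Finset.Icc (n - l) n ⊆ Finset.range (n+1) := by
    intro m hm
    simp only [Finset.mem_Icc] at hm
    simp only [Finset.mem_range]
    omega
  have hzero : ∀ m ∈ Finset.range (n+1), m ∉ Finset.Icc (n - l) n →
      lam ^ (2 * m + l - n) * (1 - lam) ^ (n - m) * N ^ (l + m - n) * (N + 1) ^ m *
        (n.choose m : ℝ) * (l.choose (n - m) : ℝ) = 0 := by
    intro m hm hmn
    simp only [Finset.mem_range] at hm
    simp only [Finset.mem_Icc] at hmn
    have : l < n - m := by omega
    rw [Nat.choose_eq_zero_of_lt this]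
    simp
  rw [Finset.sum_subset hsub hzero, Finset.mul_sum, Finset.mul_sum]

lemma lem_perm (N lam : ℝ) (hN : 0 < N) (hl0 : 0 < lam) (hl1 : lam < 1) (n m : ℕ)
    (hm : m ≤ n) :
    HasSum (fun l : ℕ => Fterm N lam n m l)
      ((n.choose m : ℝ) * (lam * (N + 1)) ^ m * (1 - lam) ^ (n - m) *
        (((n - m : ℕ) : ℝ) + (((n - m : ℕ) : ℝ) + 1) * N * lam) / (1 + N * lam) ^ n) := by
  set T : ℝ := 1 + N * lam with hT
  have hT1 : 1 < T := by nlinarith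
  have hT0 : (0:ℝ) < T := by linarith
  have hTne : T ≠ 0 := ne_of_gt hT0
  set r : ℝ := N * lam / T with hr
  have hr0 : 0 < r := div_pos (by nlinarith) hT0
  have hr1 : r < 1 := by
    rw [hr, div_lt_one hT0]
    linarith
  have hrabs : |r| < 1 := by
    rw [abs_of_pos hr0]; exact hr1
  have h1r : 1 - r = 1 / T := by
    rw [hr, eq_div_iff hTne, sub_mul, div_mul_cancel₀ _ hTne, hT]
    ring
  set k : ℕ := n - m with hk
  have hmk : m + k = n := by omega
  -- vanishing below k
  have hvanish : ∀ i < k, Fterm N lam n m i = 0 := by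
    intro i hi
    unfold Fterm
    rw [show n - m = k from rfl, Nat.choose_eq_zero_of_lt hi]
    simp
  -- the shifted series
  set c : ℝ := lam ^ m * (1 - lam) ^ k * (N + 1) ^ m * (n.choose m : ℝ) * (T ^ (k + n + 1))⁻¹
    with hc
  have hshift : HasSum (fun j : ℕ => Fterm N lam n m (j + k))
      (c * ((k : ℝ) * (1 / (1 - r) ^ (k + 1)) + ((k : ℝ) + 1) * (r * (1 / (1 - r) ^ (k + 2))))) := by
    refine ((aux_hasSum_weighted k hrabs).mul_left c).congr_fun ?_
    intro j
    unfold Fterm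
    have e1 : 2 * m + (j + k) - n = m + j := by omega
    have e2 : j + k + m - n = j := by omega
    have e3 : n - m = k := rfl
    rw [e1, e2, e3]
    rw [hc, hr]
    push_cast
    rw [div_pow, ← hT]
    have hTj : (T:ℝ) ^ (j + k + n + 1) = T ^ j * T ^ (k + n + 1) := by
      rw [← pow_add]; ring_nf
    rw [hTj]
    field_simp
    ring
  have hfull := (hasSum_nat_add_iff (f := fun l : ℕ => Fterm N lam n m l) k).mp hshift
  have hzero : ∑ i ∈ Finset.range k, Fterm N lam n m i = 0 := by
    apply Finset.sum_eq_zero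
    intro i hi
    exact hvanish i (Finset.mem_range.mp hi)
  rw [hzero, add_zero] at hfull
  convert hfull using 1
  · rfl
  -- value identity
  rw [h1r, hc, hr, mul_pow]
  rw [one_div_pow, one_div_pow, one_div_one_div, one_div_one_div,
    show k + n + 1 = (k + 1) + n by omega, show k + 2 = (k + 1) + 1 by omega, pow_add, pow_add,
    pow_one]
  field_simp
  ring

lemma lem_final (N lam : ℝ) (hN : 0 < N) (hl0 : 0 < lam) (hl1 : lam < 1) (n : ℕ) :
    ∑ m ∈ Finset.range (n+1),
      (n.choose m : ℝ) * (lam * (N + 1)) ^ m * (1 - lam) ^ (n - m) *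
        (((n - m : ℕ) : ℝ) + (((n - m : ℕ) : ℝ) + 1) * N * lam) / (1 + N * lam) ^ n
      = lam * N + (1 - lam) * n := by
  set A : ℝ := lam * (N + 1) with hA
  set B : ℝ := 1 - lam with hB
  set T : ℝ := 1 + N * lam with hT
  have hAB : A + B = T := by rw [hA, hB, hT]; ring
  have hT0 : (0:ℝ) < T := by rw [hT]; nlinarith
  have hTne : (T:ℝ) ^ n ≠ 0 := pow_ne_zero n (ne_of_gt hT0)
  rw [← Finset.sum_div]
  have hsplit : ∑ m ∈ Finset.range (n+1),
      (n.choose m : ℝ) * A ^ m * B ^ (n - m) *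
        (((n - m : ℕ) : ℝ) + (((n - m : ℕ) : ℝ) + 1) * N * lam)
      = T * (∑ m ∈ Finset.range (n+1), ((n - m : ℕ) : ℝ) * (n.choose m : ℝ) * A ^ m * B ^ (n-m))
        + N * lam * (∑ m ∈ Finset.range (n+1), (n.choose m : ℝ) * A ^ m * B ^ (n-m)) := by
    rw [Finset.mul_sum, Finset.mul_sum, ← Finset.sum_add_distrib]
    refine Finset.sum_congr rfl fun m _ => ?_
    rw [hT]; ring
  rw [hsplit]
  have hsum1 : ∑ m ∈ Finset.range (n+1), ((n - m : ℕ) : ℝ) * (n.choose m : ℝ) * A ^ m * B ^ (n-m)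
      = n * B * (B + A) ^ (n - 1) := by
    have hrefl := Finset.sum_range_reflect
      (fun m => ((n - m : ℕ) : ℝ) * (n.choose m : ℝ) * A ^ m * B ^ (n-m)) (n+1)
    simp only [Nat.add_sub_cancel] at hrefl
    rw [← hrefl]
    rw [← aux_sum_choose B A n]
    refine Finset.sum_congr rfl fun j hj => ?_
    have hjn : j ≤ n := by simpa [Nat.lt_succ_iff] using Finset.mem_range.mp hj
    have e1 : n - (n - j) = j := by omega
    rw [e1, Nat.choose_symm hjn]
    ring
  have hsum2 : ∑ m ∈ Finset.range (n+1), (n.choose m : ℝ) * A ^ m * B ^ (n-m)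
      = (A + B) ^ n := by
    rw [add_pow]
    exact Finset.sum_congr rfl fun m _ => by ring
  rw [hsum1, hsum2, hAB]
  rw [show B + A = T by rw [← hAB]; ring]
  have hpow : (n : ℝ) * B * T ^ (n-1) * T = (n : ℝ) * B * T ^ n := by
    cases n with
    | zero => simp
    | succ p =>
      rw [Nat.add_sub_cancel, pow_succ]
      ring
  rw [show T * ((n:ℝ) * B * T ^ (n-1)) = (n:ℝ) * B * T ^ (n-1) * T by ring, hpow]
  field_simp
  rw [hB]
  ring

/-- For every `N > 0`, `λ ∈ (0,1)` and `n ∈ ℕ`, the first moment of the distribution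
`{P_l(N,n,λ)}_{l∈ℕ}` equals `λN + (1−λ)n` (the mean photon number of
`Φ_{λ,|n⟩⟨n|}(τ_N)`). -/
theorem Pl_first_moment (N lam : ℝ) (hN : 0 < N) (hlam : lam ∈ Set.Ioo (0 : ℝ) 1) (n : ℕ) :
    HasSum (fun l : ℕ => (l : ℝ) * Pl N n l lam) (lam * N + (1 - lam) * n) := by
  obtain ⟨hl0, hl1⟩ := hlam
  have hsum : HasSum (fun l : ℕ => ∑ m ∈ Finset.range (n+1), Fterm N lam n m l)
      (∑ m ∈ Finset.range (n+1),
        (n.choose m : ℝ) * (lam * (N + 1)) ^ m * (1 - lam) ^ (n - m) *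
          (((n - m : ℕ) : ℝ) + (((n - m : ℕ) : ℝ) + 1) * N * lam) / (1 + N * lam) ^ n) := by
    refine hasSum_sum fun m hm => ?_
    exact lem_perm N lam hN hl0 hl1 n m (by simpa [Nat.lt_succ_iff] using Finset.mem_range.mp hm)
  rw [lem_final N lam hN hl0 hl1 n] at hsum
  exact hsum.congr_fun fun l => lem_expand N lam n l
end

section
/- For every real N > 0 and every real c > 0, the family {p_k(N,c)}_{k∈ℕ} is summable with Σ_{k=0}^∞ p_k(N,c) = 1, i.e. Σ_{k=0}^∞ (N^k/(N+1)^{k+1}) e^{−c/(N+1)} Σ_{m=0}^{k} binom(k,m) (c/(N(N+1)))^m / m! = 1. -/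
/-- For every `N > 0` and `c > 0`, the family `{p_k(N,c)}_{k∈ℕ}` is summable with
total sum `1` (an instance of the Laguerre generating-function identity). -/
theorem pdist_prob_dist (N c : ℝ) (hN : 0 < N) (hc : 0 < c) :
    HasSum (pdist N c) 1 := by
  have hN1 : (0:ℝ) < N + 1 := by linarith
  have hN1' : (N + 1 : ℝ) ≠ 0 := hN1.ne'
  have hNne : N ≠ 0 := hN.ne'
  set t : ℝ := N / (N + 1) with ht_def
  set x : ℝ := c / (N * (N + 1)) with hx_def
  have ht0 : 0 < t := div_pos hN hN1
  have ht1 : t < 1 := (div_lt_one hN1).mpr (by linarith)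
  have htn : ‖t‖ < 1 := by rw [Real.norm_eq_abs, abs_of_pos ht0]; exact ht1
  have h1t : 1 - t = 1 / (N + 1) := by
    rw [ht_def]; field_simp; ring
  have hx0 : 0 < x := div_pos hc (mul_pos hN hN1)
  -- the term of the double sum, as a function on pairs (k, m)
  set G : ℕ × ℕ → ℝ := fun p =>
    if p.2 ≤ p.1 then
      N ^ p.1 / (N + 1) ^ (p.1 + 1) * Real.exp (-c / (N + 1)) *
        ((p.1.choose p.2 : ℝ) * x ^ p.2 / (p.2.factorial : ℝ))
    else 0 with hG_def
  -- the reindexing (m, j) ↦ (j + m, m)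
  set e : ℕ × ℕ → ℕ × ℕ := fun p => (p.2 + p.1, p.1) with he_def
  have he_inj : Function.Injective e := by
    rintro ⟨m, j⟩ ⟨m', j'⟩ h
    simp only [he_def, Prod.mk.injEq] at h
    obtain ⟨h1, h2⟩ := h
    subst h2
    exact Prod.ext rfl (by omega)
  have hGe : ∀ p : ℕ × ℕ,
      G (e p) = (Real.exp (-c / (N + 1)) / (N + 1) * (x ^ p.1 / (p.1.factorial : ℝ)) * t ^ p.1) *
        (((p.2 + p.1).choose p.1 : ℝ) * t ^ p.2) := by
    rintro ⟨m, j⟩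
    simp only [hG_def, he_def]
    rw [if_pos (by omega : m ≤ j + m), ht_def, hx_def, div_pow, div_pow, div_pow, mul_pow]
    have hf : ((m.factorial : ℝ)) ≠ 0 := Nat.cast_ne_zero.mpr m.factorial_ne_zero
    field_simp
    ring
  -- fiberwise sums over j for fixed m
  have hfiber : ∀ m : ℕ, HasSum (fun j => G (e (m, j)))
      (Real.exp (-c / (N + 1)) * ((c / (N + 1)) ^ m / (m.factorial : ℝ))) := by
    intro m
    have h := (hasSum_choose_mul_geometric_of_norm_lt_one m htn).mul_left
      (Real.exp (-c / (N + 1)) / (N + 1) * (x ^ m / (m.factorial : ℝ)) * t ^ m)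
    have hsum_eq :
        Real.exp (-c / (N + 1)) / (N + 1) * (x ^ m / (m.factorial : ℝ)) * t ^ m *
          (1 / (1 - t) ^ (m + 1))
        = Real.exp (-c / (N + 1)) * ((c / (N + 1)) ^ m / (m.factorial : ℝ)) := by
      rw [h1t, ht_def, hx_def]
      rw [one_div, one_div, inv_pow, inv_inv, div_pow, div_pow, div_pow, mul_pow]
      have hm : ((m.factorial : ℝ)) ≠ 0 := Nat.cast_ne_zero.mpr m.factorial_ne_zero
      field_simp
      ring
    rw [hsum_eq] at h
    have heq : (fun j => G (e (m, j))) = fun j =>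
        Real.exp (-c / (N + 1)) / (N + 1) * (x ^ m / (m.factorial : ℝ)) * t ^ m *
          (((j + m).choose m : ℝ) * t ^ j) := by
      funext j
      simpa using hGe (m, j)
    rw [heq]
    exact h
  -- sum over m of the fiber sums is 1
  have hg : HasSum (fun m => Real.exp (-c / (N + 1)) * ((c / (N + 1)) ^ m / (m.factorial : ℝ)))
      (1 : ℝ) := by
    have h := (NormedSpace.expSeries_div_hasSum_exp (c / (N + 1))).mul_left
      (Real.exp (-c / (N + 1)))
    rw [← Real.exp_eq_exp_ℝ, ← Real.exp_add] at h
    have : -c / (N + 1) + c / (N + 1) = 0 := by ring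
    rwa [this, Real.exp_zero] at h
  -- summability of G ∘ e over the product
  have hsummable : Summable (G ∘ e) := by
    apply (summable_prod_of_nonneg ?_).mpr
    · constructor
      · exact fun m => (hfiber m).summable
      · apply Summable.congr hg.summable
        intro m
        exact ((hfiber m).tsum_eq).symm
    · rintro ⟨m, j⟩
      simp only [Function.comp_apply, hGe (m, j)]
      have : (0:ℝ) ≤ Real.exp (-c / (N + 1)) / (N + 1) * (x ^ m / (m.factorial : ℝ)) * t ^ m :=
        by positivity
      positivity
  -- HasSum (G ∘ e) 1
  have hGe1 : HasSum (G ∘ e) 1 := by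
    have h1 := hsummable.hasSum
    have h2 : HasSum (fun m => Real.exp (-c / (N + 1)) * ((c / (N + 1)) ^ m / (m.factorial : ℝ)))
        (∑' p, (G ∘ e) p) := h1.prod_fiberwise fun m => (hfiber m)
    rwa [← hg.unique h2] at h1
  -- transfer to G
  have hG1 : HasSum G 1 := by
    rw [← Function.Injective.hasSum_iff he_inj ?_]
    · exact hGe1
    · rintro ⟨k, m⟩ hkm
      by_cases h : m ≤ k
      · exact absurd ⟨(m, k - m), by simp [he_def, Nat.sub_add_cancel h]⟩ hkm
      · simp [hG_def, h]
  -- fiberwise over k gives pdist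
  have hpk : ∀ k : ℕ, HasSum (fun m => G (k, m)) (pdist N c k) := by
    intro k
    have hvanish : ∀ m ∉ Finset.range (k + 1), G (k, m) = 0 := by
      intro m hm
      simp only [Finset.mem_range, not_lt] at hm
      have hnk : ¬ m ≤ k := by omega
      simp [hG_def, hnk]
    have := hasSum_sum_of_ne_finset_zero (L := SummationFilter.unconditional ℕ) hvanish
    convert this using 1
    rw [pdist, Finset.mul_sum]
    apply Finset.sum_congr rfl
    intro m hm
    simp only [Finset.mem_range] at hm
    simp only [hG_def, if_pos (by omega : m ≤ k)]
    rw [hx_def]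
  exact hG1.prod_fiberwise hpk
end

section
/- Let p : ℕ → ℝ be a probability distribution (p_l ≥ 0 for all l and Σ_{l=0}^∞ p_l = 1) with finite second moment Σ_{l=0}^∞ l² p_l < ∞, let μ := Σ_{l=0}^∞ l p_l be its mean and V := Σ_{l=0}^∞ (l−μ)² p_l its variance. Then for every integer n ≥ 0, Σ_{l=0}^∞ | p_l − δ_{l,n} | ≤ 2 √( V + (μ − n)² ), where δ_{l,n} is 1 if l = n and 0 otherwise. (This is the Fock-diagonal case of the paper's Lemma: ‖ρ − |n⟩⟨n|‖₁ ≤ 2√(V_ρ + (⟨a†a⟩_ρ − n)²) for a state ρ with photon-number variance V_ρ, since for ρ diagonal in the Fock basis the trace norm reduces to the ℓ¹ distance of eigenvalues.) -/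
/-- Fock-diagonal case of the paper's Lemma 15: for a probability distribution `p` on `ℕ`
with finite second moment, mean `μ` and variance `V`, the ℓ¹ distance between `p` and the
point mass at `n` is at most `2√(V + (μ − n)²)`. -/
theorem l1_dist_to_point_mass_le (p : ℕ → ℝ) (n : ℕ) (hp : ∀ l, 0 ≤ p l)
    (hp1 : HasSum p 1) (h2 : Summable fun l : ℕ => (l : ℝ) ^ 2 * p l) :
    ∑' l : ℕ, |p l - (if l = n then 1 else 0)| ≤
      2 * Real.sqrt
        ((∑' l : ℕ, ((l : ℝ) - ∑' j : ℕ, (j : ℝ) * p j) ^ 2 * p l) +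
          ((∑' l : ℕ, (l : ℝ) * p l) - (n : ℝ)) ^ 2) := by
  have hs0 : Summable p := hp1.summable
  have hs1 : Summable (fun l : ℕ => (l : ℝ) * p l) := by
    apply Summable.of_nonneg_of_le (fun l => mul_nonneg (Nat.cast_nonneg l) (hp l))
      (fun l => ?_) (hs0.add h2)
    have : (l : ℝ) ≤ 1 + (l : ℝ) ^ 2 := by nlinarith [sq_nonneg ((l : ℝ) - 1)]
    nlinarith [hp l, sq_nonneg (l : ℝ)]
  have hsq : ∀ c : ℝ, Summable (fun l : ℕ => ((l : ℝ) - c) ^ 2 * p l) := by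
    intro c
    have : (fun l : ℕ => ((l : ℝ) - c) ^ 2 * p l) =
        fun l : ℕ => (l : ℝ) ^ 2 * p l - (2 * c) * ((l : ℝ) * p l) + c ^ 2 * p l := by
      funext l; ring
    rw [this]
    exact ((h2.sub ((hs1.mul_left (2 * c)))).add (hs0.mul_left (c ^ 2)))
  set μ := ∑' j : ℕ, (j : ℝ) * p j with hμ
  set V := ∑' l : ℕ, ((l : ℝ) - μ) ^ 2 * p l with hV
  -- HasSum of centered first moment is 0
  have hc : HasSum (fun l : ℕ => ((l : ℝ) - μ) * p l) 0 := by
    have h1 : HasSum (fun l : ℕ => (l : ℝ) * p l) μ := hs1.hasSum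
    have h2' : HasSum (fun l : ℕ => μ * p l) μ := by
      simpa using hp1.mul_left μ
    have := h1.sub h2'
    simpa [sub_mul] using this
  -- E = V + (μ - n)^2
  have hE : HasSum (fun l : ℕ => ((l : ℝ) - (n : ℝ)) ^ 2 * p l) (V + (μ - n) ^ 2) := by
    have hA : HasSum (fun l : ℕ => ((l : ℝ) - μ) ^ 2 * p l) V := (hsq μ).hasSum
    have hB : HasSum (fun l : ℕ => (2 * (μ - n)) * (((l : ℝ) - μ) * p l)) 0 := by
      simpa using hc.mul_left (2 * (μ - n))
    have hC : HasSum (fun l : ℕ => (μ - n) ^ 2 * p l) ((μ - n) ^ 2) := by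
      simpa using hp1.mul_left ((μ - n) ^ 2)
    have := (hA.add hB).add hC
    have heq : (fun l : ℕ => ((l : ℝ) - (n : ℝ)) ^ 2 * p l) =
        fun l : ℕ => (((l : ℝ) - μ) ^ 2 * p l + (2 * (μ - n)) * (((l : ℝ) - μ) * p l))
          + (μ - n) ^ 2 * p l := by
      funext l; ring
    rw [heq]
    simpa using this
  have hpn1 : p n ≤ 1 := le_hasSum hp1 n (fun m _ => hp m)
  -- value of the l1 distance
  have habs : ∀ l : ℕ, |p l - (if l = n then 1 else 0)| =
      (if l = n then (1 : ℝ) - p n else p l) := by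
    intro l
    by_cases h : l = n
    · subst h; simp [abs_of_nonpos (by linarith : p l - 1 ≤ 0)]
    · simp [h, abs_of_nonneg (hp l)]
  have hsum_rest : ∑' l : ℕ, (if l = n then (0 : ℝ) else p l) = 1 - p n := by
    have := Summable.tsum_eq_add_tsum_ite hs0 n
    rw [hp1.tsum_eq] at this
    linarith
  have hsumm : Summable (fun l : ℕ => if l = n then (1 : ℝ) - p n else p l) := by
    have := hs0.update n (1 - p n)
    apply this.congr
    intro l
    by_cases h : l = n
    · subst h; simp [Function.update]
    · simp [Function.update, h]
  have hL : ∑' l : ℕ, |p l - (if l = n then 1 else 0)| = 2 * (1 - p n) := by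
    rw [tsum_congr habs]
    have := Summable.tsum_eq_add_tsum_ite hsumm n
    simp only [if_pos rfl] at this
    rw [this]
    have : (∑' l : ℕ, if l = n then (0 : ℝ) else if l = n then 1 - p n else p l)
        = ∑' l : ℕ, if l = n then (0 : ℝ) else p l := by
      apply tsum_congr; intro l; by_cases h : l = n <;> simp [h]
    rw [this, hsum_rest]; norm_num; ring
  -- 1 - p n ≤ E
  have hVnn : 0 ≤ V := tsum_nonneg fun l => mul_nonneg (sq_nonneg _) (hp l)
  have hle : 1 - p n ≤ V + (μ - n) ^ 2 := by
    rw [← hsum_rest, ← hE.tsum_eq]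
    apply Summable.tsum_le_tsum _ _ hE.summable
    · intro l
      by_cases h : l = n
      · simp [h, mul_nonneg (sq_nonneg ((n : ℝ) - n)) (hp n)]
      · simp only [if_neg h]
        have h1 : (1 : ℝ) ≤ ((l : ℝ) - n) ^ 2 := by
          rcases (Ne.lt_or_gt h) with hlt | hlt
          · have : (l : ℝ) + 1 ≤ n := by exact_mod_cast hlt
            nlinarith
          · have : (n : ℝ) + 1 ≤ l := by exact_mod_cast hlt
            nlinarith
        nlinarith [hp l]
    · apply Summable.of_nonneg_of_le (fun l => ?_) (fun l => ?_) hs0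
      · split <;> simp [hp _]
      · split <;> simp [hp _]
  have h1pn : 0 ≤ 1 - p n := by linarith
  have hsq' : (1 - p n) ^ 2 ≤ V + (μ - n) ^ 2 := by
    nlinarith [mul_nonneg h1pn (hp n)]
  have := Real.sqrt_le_sqrt hsq'
  rw [Real.sqrt_sq h1pn] at this
  rw [hL]
  linarith
end

section
/- Let N > 0 be a real number and let p : ℕ → ℝ be a probability distribution (p_l ≥ 0, Σ_{l=0}^∞ p_l = 1) whose mean satisfies Σ_{l=0}^∞ l p_l ≤ N. Then its Shannon entropy satisfies H(p) = −Σ_{l=0}^∞ p_l log₂ p_l ≤ g(N), where g(N) := (N+1) log₂(N+1) − N log₂ N. (This is the single-mode, Fock-diagonal content of the paper's Lemma 1: among all states with mean photon number at most N, the thermal state τ_N maximises the entropy, with maximal value g(N).) -/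
/-- Gibbs-type pointwise inequality: `a log a ≥ a log b + (a - b)` for `a ≥ 0`, `b > 0`. -/
lemma gibbs_pointwise {a b : ℝ} (ha : 0 ≤ a) (hb : 0 < b) :
    a * Real.log b + (a - b) ≤ a * Real.log a := by
  rcases eq_or_lt_of_le ha with h | h
  · simp [← h]
    linarith
  · have hba : 0 < b / a := div_pos hb h
    have := Real.log_le_sub_one_of_pos hba
    have hlog : Real.log (b / a) = Real.log b - Real.log a := Real.log_div hb.ne' h.ne'
    rw [hlog] at this
    have h2 : a * (Real.log b - Real.log a) ≤ a * (b / a - 1) :=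
      mul_le_mul_of_nonneg_left this ha
    have h3 : a * (b / a - 1) = b - a := by field_simp
    nlinarith

/-- Fock-diagonal form of the maximum entropy property of the thermal state: any
probability distribution on `ℕ` with mean at most `N` has Shannon entropy at most
`g(N) = (N+1) log₂(N+1) − N log₂ N`. -/
theorem entropy_le_bosonic_entropy (N : ℝ) (hN : 0 < N) (p : ℕ → ℝ)
    (hp : ∀ l, 0 ≤ p l) (hp1 : HasSum p 1)
    (hmom : Summable fun l : ℕ => (l : ℝ) * p l)
    (hmean : ∑' l : ℕ, (l : ℝ) * p l ≤ N) :
    -∑' l : ℕ, p l * Real.logb 2 (p l) ≤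
      (N + 1) * Real.logb 2 (N + 1) - N * Real.logb 2 N := by
  have hN1 : (0:ℝ) < N + 1 := by linarith
  set r : ℝ := N / (N + 1) with hr
  have hr0 : 0 < r := div_pos hN hN1
  have hr1 : r < 1 := (div_lt_one hN1).mpr (by linarith)
  set q : ℕ → ℝ := fun l => (1 / (N + 1)) * r ^ l with hq
  have hq0 : ∀ l, 0 < q l := fun l => mul_pos (by positivity) (pow_pos hr0 l)
  -- q sums to 1
  have hqs : HasSum q 1 := by
    have hgeo : HasSum (fun l : ℕ => r ^ l) (1 - r)⁻¹ := hasSum_geometric_of_lt_one hr0.le hr1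
    have := hgeo.mul_left (1 / (N + 1))
    convert this using 1
    · rfl
    have : 1 - r = 1 / (N + 1) := by rw [hr]; field_simp; ring
    rw [this]
    field_simp
  -- log of q
  have hlogq : ∀ l : ℕ, Real.log (q l) = -Real.log (N + 1) + (l : ℝ) * Real.log r := by
    intro l
    rw [hq]
    simp only
    rw [Real.log_mul (by positivity) (pow_pos hr0 l).ne', Real.log_pow,
      Real.log_div one_ne_zero hN1.ne', Real.log_one]
    ring
  set glow : ℕ → ℝ := fun l => p l * Real.log (q l) + (p l - q l) with hglow
  have hsump : Summable p := hp1.summable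
  -- summability of p l * log (q l)
  have hsumplogq : Summable (fun l => p l * Real.log (q l)) := by
    have : (fun l => p l * Real.log (q l)) =
        fun l => (-Real.log (N + 1)) * p l + Real.log r * ((l : ℝ) * p l) := by
      funext l; rw [hlogq l]; ring
    rw [this]
    exact ((hsump.mul_left _).add (hmom.mul_left _))
  have hsumplogq_val : ∑' l, p l * Real.log (q l) =
      -Real.log (N + 1) + Real.log r * ∑' l : ℕ, (l : ℝ) * p l := by
    have heq : (fun l => p l * Real.log (q l)) =
        fun l => (-Real.log (N + 1)) * p l + Real.log r * ((l : ℝ) * p l) := by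
      funext l; rw [hlogq l]; ring
    rw [heq, Summable.tsum_add (hsump.mul_left _) (hmom.mul_left _), tsum_mul_left, tsum_mul_left,
      hp1.tsum_eq]
    ring
  have hsumglow : Summable glow := by
    exact (hsumplogq.add (hsump.sub hqs.summable))
  have hglowsum : ∑' l, glow l = ∑' l, p l * Real.log (q l) := by
    rw [hglow, Summable.tsum_add hsumplogq (hsump.sub hqs.summable),
      Summable.tsum_sub hsump hqs.summable, hp1.tsum_eq, hqs.tsum_eq]
    simp
  -- pointwise bound
  have hpt : ∀ l, glow l ≤ p l * Real.log (p l) := fun l => gibbs_pointwise (hp l) (hq0 l)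
  have hple1 : ∀ l, p l ≤ 1 := fun l => le_hasSum hp1 l (fun i _ => hp i)
  set f : ℕ → ℝ := fun l => p l * Real.log (p l) with hf
  have hfle0 : ∀ l, f l ≤ 0 := by
    intro l
    rcases eq_or_lt_of_le (hp l) with h | h
    · simp [hf, ← h]
    · exact mul_nonpos_of_nonneg_of_nonpos (hp l) (Real.log_nonpos (hp l) (hple1 l))
  have hsumf : Summable f := by
    have : Summable (fun l => -f l) := by
      apply Summable.of_nonneg_of_le (fun l => neg_nonneg.mpr (hfle0 l))
        (fun l => neg_le_neg (hpt l)) hsumglow.neg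
    simpa using this.neg
  have hS : ∑' l, glow l ≤ ∑' l, f l := Summable.tsum_le_tsum hpt hsumglow hsumf
  have hlogr : Real.log r = Real.log N - Real.log (N + 1) := Real.log_div hN.ne' hN1.ne'
  have hlogrneg : Real.log r ≤ 0 := Real.log_nonpos hr0.le hr1.le
  have hmul : Real.log r * N ≤ Real.log r * ∑' l : ℕ, (l : ℝ) * p l := by
    apply mul_le_mul_of_nonpos_left hmean hlogrneg
  have hSlow : -Real.log (N + 1) + Real.log r * N ≤ ∑' l, f l := by
    calc -Real.log (N + 1) + Real.log r * N
        ≤ -Real.log (N + 1) + Real.log r * ∑' l : ℕ, (l : ℝ) * p l := by linarith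
      _ = ∑' l, p l * Real.log (q l) := hsumplogq_val.symm
      _ = ∑' l, glow l := hglowsum.symm
      _ ≤ ∑' l, f l := hS
  -- convert logb to log
  have hlog2 : (0:ℝ) < Real.log 2 := Real.log_pos (by norm_num)
  have htsumb : ∑' l : ℕ, p l * Real.logb 2 (p l) = (∑' l, f l) / Real.log 2 := by
    rw [← tsum_div_const]
    congr 1
    funext l
    rw [Real.logb, hf]
    ring
  rw [htsumb, Real.logb, Real.logb, ← neg_div]
  rw [div_le_iff₀ hlog2]
  have : -(∑' l, f l) ≤ Real.log (N + 1) + (Real.log (N + 1) - Real.log N) * N := by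
    rw [hlogr] at hSlow; linarith
  calc -(∑' l, f l) ≤ Real.log (N + 1) + (Real.log (N + 1) - Real.log N) * N := this
    _ = ((N + 1) * (Real.log (N + 1) / Real.log 2) - N * (Real.log N / Real.log 2)) * Real.log 2 := by
        field_simp; ring
end

section
/- For every real N > 0, every real c > 0 and every integer k ≥ 0, lim_{n→∞} Σ_{m=0}^{n−k} (1 − c/n)^{−m} (c²N(N+1))^m binom(n, m+k) binom(n−k, m) / n^{2m+k} = Σ_{m=0}^∞ (c²N(N+1))^m / ((m+k)!·m!), where the limit is over integers n ≥ k with n > c. (This is the interchange of limit and series justified by Tannery's theorem in the proof of the paper's Theorem 8.) -/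
open Filter Finset

lemma aux_choose_tendsto_s14 (j r : ℕ) :
    Filter.Tendsto (fun n : ℕ => (((n - j).choose r : ℝ)) / (n : ℝ) ^ r)
      Filter.atTop (nhds (1 / (r.factorial : ℝ))) := by
  have h : ∀ᶠ n : ℕ in atTop,
      ((∏ i ∈ Finset.range r, (1 - ((j : ℝ) + i) / n)) / (r.factorial : ℝ))
        = (((n - j).choose r : ℝ)) / (n : ℝ) ^ r := by
    filter_upwards [eventually_ge_atTop (j + r), eventually_gt_atTop 0] with n hn hn0
    have hn0' : (0 : ℝ) < (n : ℝ) := by exact_mod_cast hn0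
    have hfac : (0 : ℝ) < (r.factorial : ℝ) := by exact_mod_cast r.factorial_pos
    have hcast : ((r.factorial : ℝ)) * (((n - j).choose r : ℝ))
        = ∏ i ∈ Finset.range r, ((n : ℝ) - j - i) := by
      have h1 : ((r.factorial * ((n - j).choose r) : ℕ) : ℝ)
          = ((∏ i ∈ Finset.range r, (n - j - i) : ℕ) : ℝ) := by
        rw [← Nat.descFactorial_eq_factorial_mul_choose,
          Nat.descFactorial_eq_prod_range]
      rw [Nat.cast_mul, Nat.cast_prod] at h1
      rw [h1]
      refine Finset.prod_congr rfl fun i hi => ?_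
      have hi' : i < r := Finset.mem_range.mp hi
      have hij : i ≤ n - j := by omega
      have hjn : j ≤ n := by omega
      rw [Nat.cast_sub hij, Nat.cast_sub hjn]
    have hprod : ∏ i ∈ Finset.range r, (1 - ((j : ℝ) + i) / n)
        = (∏ i ∈ Finset.range r, ((n : ℝ) - j - i)) / (n : ℝ) ^ r := by
      rw [show (∏ i ∈ Finset.range r, (1 - ((j : ℝ) + i) / n))
          = ∏ i ∈ Finset.range r, (((n : ℝ) - j - i) / n) from
        Finset.prod_congr rfl fun i _ => by field_simp; ring,
        Finset.prod_div_distrib, Finset.prod_const, Finset.card_range]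
    rw [hprod, ← hcast]
    field_simp
  refine Tendsto.congr' h ?_
  have h2 : Filter.Tendsto (fun n : ℕ => ∏ i ∈ Finset.range r, (1 - ((j : ℝ) + i) / n))
      Filter.atTop (nhds (∏ _i ∈ Finset.range r, (1 : ℝ))) := by
    refine tendsto_finset_prod _ fun i _ => ?_
    have := tendsto_const_div_atTop_nhds_zero_nat ((j : ℝ) + i)
    simpa using tendsto_const_nhds.sub this
  simpa using h2.div_const (r.factorial : ℝ)

/-- The interchange of limit and series justified by Tannery's theorem in the proof of
Theorem 8 of the paper. -/
theorem tannery_interchange (N c : ℝ) (hN : 0 < N) (hc : 0 < c) (k : ℕ) :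
    Filter.Tendsto
      (fun n : ℕ =>
        ∑ m ∈ Finset.range (n - k + 1),
          ((1 - c / (n : ℝ)) ^ m)⁻¹ * (c ^ 2 * N * (N + 1)) ^ m *
            (n.choose (m + k) : ℝ) * ((n - k).choose m : ℝ) / (n : ℝ) ^ (2 * m + k))
      Filter.atTop
      (nhds (∑' m : ℕ, (c ^ 2 * N * (N + 1)) ^ m /
        (((m + k).factorial : ℝ) * (m.factorial : ℝ)))) := by
  have hA : (0 : ℝ) < c ^ 2 * N * (N + 1) := by positivity
  set A : ℝ := c ^ 2 * N * (N + 1) with hAdef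
  clear_value A
  set f : ℕ → ℕ → ℝ := fun n m =>
    ((1 - c / (n : ℝ)) ^ m)⁻¹ * A ^ m *
      (n.choose (m + k) : ℝ) * ((n - k).choose m : ℝ) / (n : ℝ) ^ (2 * m + k) with hf
  have hsum_eq : ∀ n : ℕ,
      (∑ m ∈ Finset.range (n - k + 1), f n m) = ∑' m, f n m := by
    intro n
    refine (tsum_eq_sum fun m hm => ?_).symm
    have hm' : n - k < m := by
      have := Finset.mem_range.not.mp hm
      omega
    simp [hf, Nat.choose_eq_zero_of_lt hm']
  -- key factorization
  have key : ∀ n m : ℕ, f n m =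
      (((1 - c / (n : ℝ)) ^ m)⁻¹ * A ^ m) *
        ((n.choose (m + k) : ℝ) / (n : ℝ) ^ (m + k)) *
        (((n - k).choose m : ℝ) / (n : ℝ) ^ m) := by
    intro n m
    have hp : (n : ℝ) ^ (2 * m + k) = (n : ℝ) ^ (m + k) * (n : ℝ) ^ m := by
      rw [← pow_add]; congr 1; omega
    rw [hf]; simp only; rw [hp]; ring
  have main : Filter.Tendsto (fun n : ℕ => ∑' m, f n m) Filter.atTop
      (nhds (∑' m : ℕ, A ^ m / (((m + k).factorial : ℝ) * (m.factorial : ℝ)))) := by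
    refine tendsto_tsum_of_dominated_convergence
      (bound := fun m : ℕ => (2 * A) ^ m / (m.factorial : ℝ))
      (Real.summable_pow_div_factorial (2 * A)) ?_ ?_
    · intro m
      have h1 : Filter.Tendsto (fun n : ℕ => ((1 - c / (n : ℝ)) ^ m)⁻¹)
          Filter.atTop (nhds 1) := by
        have hc0 : Filter.Tendsto (fun n : ℕ => 1 - c / (n : ℝ)) Filter.atTop (nhds 1) := by
          simpa using tendsto_const_nhds.sub (tendsto_const_div_atTop_nhds_zero_nat c)
        have := ((hc0.pow m).inv₀ (by norm_num)).comp tendsto_id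
        simpa using (hc0.pow m).inv₀ (by norm_num)
      have h2 := aux_choose_tendsto_s14 0 (m + k)
      simp only [Nat.sub_zero] at h2
      have h3 := aux_choose_tendsto_s14 k m
      have := ((h1.mul_const (A ^ m)).mul h2).mul h3
      refine Filter.Tendsto.congr (fun n => (key n m).symm) ?_
      convert this using 2
      field_simp
    · -- bound
      have hev1 : ∀ᶠ n : ℕ in atTop, 2 * c ≤ (n : ℝ) :=
        tendsto_natCast_atTop_atTop.eventually (eventually_ge_atTop (2 * c))
      filter_upwards [hev1, eventually_gt_atTop 0] with n hn hn0
      intro m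
      have hn0' : (0 : ℝ) < (n : ℝ) := by exact_mod_cast hn0
      have hhalf : (1:ℝ)/2 ≤ 1 - c / (n : ℝ) := by
        have h : c / (n : ℝ) ≤ 1/2 := by rw [div_le_iff₀ hn0']; linarith
        linarith
      have hpos : (0:ℝ) < 1 - c / (n : ℝ) := by linarith
      have hfacpos1 : (0:ℝ) < ((m + k).factorial : ℝ) := by
        exact_mod_cast (m + k).factorial_pos
      have hfacpos2 : (0:ℝ) < (m.factorial : ℝ) := by exact_mod_cast m.factorial_pos
      have hinv : ((1 - c / (n : ℝ)) ^ m)⁻¹ ≤ 2 ^ m := by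
        rw [inv_le_comm₀ (by positivity) (by positivity)]
        calc ((2:ℝ)^m)⁻¹ = ((1:ℝ)/2)^m := by rw [one_div, inv_pow]
        _ ≤ (1 - c / (n : ℝ)) ^ m := by
            exact pow_le_pow_left₀ (by norm_num) hhalf m
      have hq1 : (n.choose (m + k) : ℝ) / (n : ℝ) ^ (m + k) ≤ 1 := by
        rw [div_le_one (by positivity)]
        calc (n.choose (m+k) : ℝ) ≤ ((n:ℝ)^(m+k)) / ((m+k).factorial : ℝ) :=
              Nat.choose_le_pow_div _ _
        _ ≤ (n:ℝ)^(m+k) :=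
            div_le_self (by positivity) (by exact_mod_cast (m+k).factorial_pos)
      have hq2 : ((n - k).choose m : ℝ) / (n : ℝ) ^ m ≤ 1 / (m.factorial : ℝ) := by
        rw [div_le_div_iff₀ (by positivity) hfacpos2]
        calc ((n - k).choose m : ℝ) * (m.factorial : ℝ)
            ≤ ((n:ℝ)^m / (m.factorial : ℝ)) * (m.factorial : ℝ) := by
              gcongr
              calc ((n - k).choose m : ℝ) ≤ (((n-k):ℕ):ℝ)^m / (m.factorial : ℝ) :=
                    Nat.choose_le_pow_div _ _
              _ ≤ (n:ℝ)^m / (m.factorial : ℝ) := by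
                  gcongr
                  exact_mod_cast Nat.sub_le n k
        _ = 1 * (n:ℝ)^m := by field_simp
      have hfnonneg : 0 ≤ f n m := by
        rw [key]
        have := hpos
        positivity
      rw [Real.norm_of_nonneg hfnonneg, key]
      calc (((1 - c / (n : ℝ)) ^ m)⁻¹ * A ^ m) *
            ((n.choose (m + k) : ℝ) / (n : ℝ) ^ (m + k)) *
            (((n - k).choose m : ℝ) / (n : ℝ) ^ m)
          ≤ (2 ^ m * A ^ m) * 1 * (1 / (m.factorial : ℝ)) := by
            gcongr <;> positivity
          _ = (2 * A) ^ m / (m.factorial : ℝ) := by rw [mul_pow]; ring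
  refine Filter.Tendsto.congr (fun n => (hsum_eq n).symm) main
end
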